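/- arXiv:1810.02226 — 5 statements merged into one kernel-verified Lean document; each statement's English description precedes it below -/
import Mathlib

section
/- For every positive integer n and every complex number z, the sum over all partitions λ of n of the product, over the multiset H(λ)^⋄ of hook lengths of cells of λ whose leg length is 0, of (h+z)/h equals P_n(z+1), where P_n denotes the n-th D'Arcais polynomial. Equivalently, as polynomials in z, Σ_{λ⊢n} Π_{h∈H(λ)^⋄} (h+z)/h = P_n(z+1). -/
open Finset Polynomial

/-- The `n`-th D'Arcais polynomial `P_n ∈ ℚ[x]`, defined via the recursion
`P_0 = 1`, `P_n = (x/n) · ∑_{k=1}^n σ(k) P_{n-k}` (equivalently, via the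
formal power series identity `∑_{n≥0} P_n(x) q^n = ∏_{m≥1} (1 - q^m)^{-x}`). -/
noncomputable def darcais : ℕ → Polynomial ℚ
  | 0 => 1
  | n + 1 =>
      Polynomial.C (((n : ℚ) + 1)⁻¹) * Polynomial.X *
        ∑ k ∈ Finset.range (n + 1),
          ((∑ d ∈ Nat.divisors (k + 1), d : ℕ) : ℚ) • darcais (n - k)
  termination_by n => n
  decreasing_by omega

/-- Length of column `j` (0-indexed) of the Young diagram of `μ`,
i.e. the number of parts of `μ` that are at least `j+1`. -/
def colLen {n : ℕ} (μ : Nat.Partition n) (j : ℕ) : ℕ :=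
  (μ.parts.filter (fun p => j + 1 ≤ p)).card

/-- Length of row `i` (0-indexed) of the Young diagram of `μ`; this is the
`(i+1)`-st largest part of `μ` (or `0` if there is no such part). -/
def rowLen {n : ℕ} (μ : Nat.Partition n) (i : ℕ) : ℕ :=
  ((Finset.range n).filter (fun j => i < colLen μ j)).card

/-- The cells (0-indexed, `(row, column)`) of the Young diagram of `μ`. -/
def cells {n : ℕ} (μ : Nat.Partition n) : Finset (ℕ × ℕ) :=
  (Finset.range n ×ˢ Finset.range n).filter (fun c => c.1 < colLen μ c.2)

/-- The arm length of a cell: the number of cells strictly to its right in its row. -/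
def armLen {n : ℕ} (μ : Nat.Partition n) (c : ℕ × ℕ) : ℕ := rowLen μ c.1 - (c.2 + 1)

/-- The leg length of a cell: the number of cells strictly below it in its column. -/
def legLen {n : ℕ} (μ : Nat.Partition n) (c : ℕ × ℕ) : ℕ := colLen μ c.2 - (c.1 + 1)

/-- The hook length of a cell: `arm + leg + 1`. -/
def hookLen {n : ℕ} (μ : Nat.Partition n) (c : ℕ × ℕ) : ℕ := armLen μ c + legLen μ c + 1

/-- `H(μ)`: the multiset of all hook lengths of `μ`. -/
def hooks {n : ℕ} (μ : Nat.Partition n) : Multiset ℕ := (cells μ).val.map (hookLen μ)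

/-- `H(μ)^⋄`: the multiset of hook lengths of the cells of `μ` with trivial leg. -/
def hooksDia {n : ℕ} (μ : Nat.Partition n) : Multiset ℕ :=
  (((cells μ).filter (fun c => legLen μ c = 0)).val).map (hookLen μ)

/-- `H(μ)^⋄⋄`: the multiset of hook lengths of the cells of `μ` with trivial arm. -/
def hooksDiaDia {n : ℕ} (μ : Nat.Partition n) : Multiset ℕ :=
  (((cells μ).filter (fun c => armLen μ c = 0)).val).map (hookLen μ)

/-!
Reading the cells of leg `0` row by row, row `i` contributes the hooks `1, …, m`, where `m` is
the number of columns of length `i + 1`, i.e. the multiplicity of the part `i + 1` of the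
conjugate partition `λ'`. With `x = z + 1` the summand is therefore `∏ₖ c(mₖ(λ'))`, where
`c(m) = ∏_{t<m} (x + t)/(t + 1)` is the coefficient of `qᵐ` in `(1 - q)⁻ˣ`. Since conjugation is
a bijection, the sum over `λ ⊢ n` is the coefficient of `qⁿ` in `G = ∏ₖ (1 - qᵏ)⁻ˣ`, and the
logarithmic derivative `q G'/G = x ∑ₖ k qᵏ/(1 - qᵏ) = x ∑ₙ σ(n) qⁿ` is the D'Arcais recursion.
-/

open scoped PowerSeries PowerSeries.WithPiTopology

lemma mem_filter_range_iff_lt_card {N : ℕ} {P : ℕ → Prop} [DecidablePred P]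
    (hP : ∀ ⦃a b⦄, a ≤ b → P b → P a) {j : ℕ} :
    j ∈ (range N).filter P ↔ j < #((range N).filter P) := by
  constructor
  · intro hj
    rw [mem_filter, mem_range] at hj
    calc j < #(range (j + 1)) := by simp
      _ ≤ _ := card_le_card fun k hk => by
        rw [mem_range] at hk
        exact mem_filter.2 ⟨mem_range.2 (by omega), hP (by omega) hj.2⟩
  · intro hj
    by_contra hj'
    have hsub : (range N).filter P ⊆ range j := fun k hk => by
      rw [mem_filter, mem_range] at hk
      rw [mem_range]
      by_contra hkj
      exact hj' (mem_filter.2 ⟨mem_range.2 (by omega), hP (by omega) hk.2⟩)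
    have := card_le_card hsub
    rw [card_range] at this
    omega

lemma sum_range_countP_le (s : Multiset ℕ) {N : ℕ} (h : ∀ p ∈ s, p ≤ N) :
    ∑ j ∈ range N, s.countP (j + 1 ≤ ·) = s.sum := by
  induction s using Multiset.induction with
  | empty => simp
  | cons a s ih =>
    have hrange : (range N).filter (· + 1 ≤ a) = range a := by
      ext j
      have := h a (Multiset.mem_cons_self a s)
      simp only [mem_filter, mem_range]
      omega
    simp only [Multiset.countP_cons, sum_add_distrib, Multiset.sum_cons,
      ih fun p hp => h p (Multiset.mem_cons_of_mem hp)]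
    rw [← sum_filter, hrange, sum_const, card_range, smul_eq_mul, mul_one, add_comm]

lemma prod_Ico_sub_eq_prod_range {M : Type*} [CommMonoid M] (f : ℕ → M) (a b : ℕ) :
    ∏ j ∈ Ico a b, f (b - j) = ∏ t ∈ range (b - a), f (t + 1) := by
  rw [prod_Ico_eq_prod_range, ← prod_range_reflect (fun t => f (t + 1))]
  exact prod_congr rfl fun k hk => by rw [mem_range] at hk; congr 1; omega

section YoungDiagram

variable {n : ℕ} (μ : Nat.Partition n)

lemma colLen_antitone : Antitone (colLen μ) := fun _ _ h =>
  Multiset.card_le_card (Multiset.monotone_filter_right _ fun _ hb => by omega)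

lemma colLen_eq_zero {j : ℕ} (h : n ≤ j) : colLen μ j = 0 := by
  rw [colLen, Multiset.card_eq_zero, Multiset.filter_eq_nil]
  intro p hp
  have := Nat.Partition.le_of_mem_parts hp
  omega

lemma sum_colLen : ∑ j ∈ range n, colLen μ j = n := by
  simp only [colLen, ← Multiset.countP_eq_card_filter]
  rw [sum_range_countP_le _ fun p hp => Nat.Partition.le_of_mem_parts hp, μ.parts_sum]

lemma lt_colLen_iff {i j : ℕ} : i < colLen μ j ↔ j < rowLen μ i := by
  rw [rowLen, ← mem_filter_range_iff_lt_card fun a b hab hb =>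
    hb.trans_le (colLen_antitone μ hab), mem_filter, mem_range, iff_and_self]
  intro h
  by_contra hj
  rw [colLen_eq_zero μ (not_lt.1 hj)] at h
  omega

lemma count_succ_parts (v : ℕ) :
    μ.parts.count (v + 1) = colLen μ v - colLen μ (v + 1) := by
  have hsplit : μ.parts.filter (v + 1 ≤ ·)
      = μ.parts.filter (v + 1 + 1 ≤ ·) + μ.parts.filter (v + 1 = ·) := by
    ext a
    simp only [Multiset.count_add, Multiset.count_filter]
    split_ifs <;> omega
  rw [colLen, colLen, hsplit, Multiset.card_add, Multiset.count_eq_card_filter_eq]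
  omega

lemma eq_of_colLen_eq {ν : Nat.Partition n} (h : ∀ j, colLen μ j = colLen ν j) : μ = ν := by
  refine Nat.Partition.ext (Multiset.ext.2 fun v => ?_)
  rcases v with _ | v
  · rw [Multiset.count_eq_zero.2 fun h0 => (μ.parts_pos h0).false,
      Multiset.count_eq_zero.2 fun h0 => (ν.parts_pos h0).false]
  · rw [count_succ_parts, count_succ_parts, h, h]

lemma eq_of_rowLen_eq {ν : Nat.Partition n} (h : ∀ i, rowLen μ i = rowLen ν i) : μ = ν :=
  eq_of_colLen_eq μ fun j => eq_of_forall_lt_iff fun i => by rw [lt_colLen_iff, lt_colLen_iff, h]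

def conjugate : Nat.Partition n :=
  .ofSums n ((range n).val.map (colLen μ)) ((sum_map_val _ _).trans (sum_colLen μ))

lemma colLen_conjugate (i : ℕ) : colLen (conjugate μ) i = rowLen μ i := by
  rw [colLen, rowLen, conjugate, Nat.Partition.ofSums_parts, Multiset.filter_filter,
    Multiset.filter_map, Multiset.card_map, card_def, filter_val]
  congr 1
  refine Multiset.filter_congr fun j _ => ?_
  simp only [Function.comp_apply, colLen]
  omega

lemma count_succ_conjugate_parts (i : ℕ) :
    (conjugate μ).parts.count (i + 1) = rowLen μ i - rowLen μ (i + 1) := by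
  rw [count_succ_parts, colLen_conjugate, colLen_conjugate]

lemma conjugate_injective : Function.Injective (conjugate (n := n)) := fun μ ν h =>
  eq_of_rowLen_eq μ fun i => by rw [← colLen_conjugate, h, colLen_conjugate]

lemma filter_colLen_eq_succ (i : ℕ) :
    (range n).filter (colLen μ · = i + 1) = Ico (rowLen μ (i + 1)) (rowLen μ i) := by
  ext j
  rw [mem_filter, mem_range, mem_Ico, ← not_lt, ← lt_colLen_iff, ← lt_colLen_iff]
  constructor
  · omega
  · intro h
    refine ⟨not_le.1 fun hj => ?_, by omega⟩
    rw [colLen_eq_zero μ hj] at h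
    omega

lemma prod_map_hooksDia {M : Type*} [CommMonoid M] (f : ℕ → M) :
    ((hooksDia μ).map f).prod =
      ∏ i ∈ range n, ∏ t ∈ range (rowLen μ i - rowLen μ (i + 1)), f (t + 1) := by
  have hcells : (cells μ).filter (legLen μ · = 0) =
      (range n ×ˢ range n).filter fun c => colLen μ c.2 = c.1 + 1 := by
    rw [cells, filter_filter]
    exact filter_congr fun c _ => by rw [legLen]; omega
  rw [hooksDia, Multiset.map_map, prod_map_val, hcells, prod_filter, prod_product]
  refine prod_congr rfl fun i _ => ?_
  rw [← prod_filter, filter_colLen_eq_succ, ← prod_Ico_sub_eq_prod_range]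
  refine prod_congr rfl fun j hj => ?_
  rw [← filter_colLen_eq_succ, mem_filter] at hj
  have hrow : j < rowLen μ i := (lt_colLen_iff μ).1 (by omega)
  rw [Function.comp_apply, hookLen, armLen, legLen]
  congr 1
  simp only
  omega

end YoungDiagram

lemma toFinsupp_prod_eq_prod_range_count {M : Type*} [CommMonoid M] {n : ℕ} (ν : n.Partition)
    (g : ℕ → M) (hg : g 0 = 1) :
    ν.parts.toFinsupp.prod (fun _ c => g c) = ∏ i ∈ range n, g (ν.parts.count (i + 1)) := by
  have hsupp : ν.parts.toFinsupp.support ⊆ Ico 1 (n + 1) := fun p hp => by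
    rw [Multiset.toFinsupp_support, Multiset.mem_toFinset] at hp
    exact mem_Ico.2 ⟨ν.parts_pos hp, Nat.lt_succ_of_le (Nat.Partition.le_of_mem_parts hp)⟩
  rw [Finsupp.prod_of_support_subset _ hsupp _ fun _ _ => hg, range_eq_Ico,
    prod_Ico_add' (fun k => g (ν.parts.count k)), zero_add]
  simp only [Multiset.toFinsupp_apply]

namespace PowerSeries

section CommRing

variable {R : Type*} [CommRing R]

lemma derivative_expand (p : ℕ) (hp : p ≠ 0) (f : R⟦X⟧) :
    d⁄dX R (expand p hp f) = C (p : R) * X ^ (p - 1) * expand p hp (d⁄dX R f) := by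
  rw [expand_apply, expand_apply, derivative_subst (HasSubst.X_pow hp), derivative_pow,
    derivative_X, map_natCast]
  ring

lemma X_pow_dvd_expand_sub_one (p : ℕ) (hp : p ≠ 0) {φ : R⟦X⟧} (hφ : constantCoeff φ = 1) :
    X ^ p ∣ expand p hp φ - 1 := by
  refine X_pow_dvd_iff.2 fun m hm => ?_
  rcases m with _ | m
  · simp [hφ]
  · rw [map_sub, coeff_expand_of_not_dvd p hp φ fun h => by
      have := Nat.le_of_dvd m.succ_pos h; omega, coeff_one, if_neg m.succ_ne_zero, sub_zero]

lemma X_mul_derivative_prod {ι : Type*} [DecidableEq ι] (s : Finset ι)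
    (f L : ι → R⟦X⟧) (c : R⟦X⟧) (h : ∀ i ∈ s, X * d⁄dX R (f i) = c * L i * f i) :
    X * d⁄dX R (∏ i ∈ s, f i) = c * (∑ i ∈ s, L i) * ∏ i ∈ s, f i := by
  induction s using Finset.induction_on with
  | empty => simp
  | insert a s ha ih =>
    rw [prod_insert ha, sum_insert ha, Derivation.leibniz, smul_eq_mul, smul_eq_mul]
    linear_combination f a * ih (fun i hi => h i (mem_insert_of_mem hi)) +
      (∏ i ∈ s, f i) * h a (mem_insert_self a s)

end CommRing

section Euler

variable {K : Type*} [Field K]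

/-- `(1 - X)⁻ˣ`; `eulerFactor x i` is `(1 - X ^ (i + 1))⁻ˣ` and `lambertTerm i` is
`(i + 1) X ^ (i + 1) / (1 - X ^ (i + 1))`. -/
noncomputable def negBinomialSeries (x : K) : K⟦X⟧ :=
  mk fun k => ∏ t ∈ range k, (x + t) / (t + 1)

noncomputable def eulerFactor (x : K) (i : ℕ) : K⟦X⟧ :=
  expand (i + 1) i.succ_ne_zero (negBinomialSeries x)

noncomputable def lambertTerm (i : ℕ) : K⟦X⟧ :=
  C ((i + 1 : ℕ) : K) * X ^ (i + 1) * expand (i + 1) i.succ_ne_zero (mk 1)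

lemma coeff_negBinomialSeries (x : K) (k : ℕ) :
    coeff k (negBinomialSeries x) = ∏ t ∈ range k, (x + t) / (t + 1) :=
  coeff_mk _ _

lemma constantCoeff_negBinomialSeries (x : K) : constantCoeff (negBinomialSeries x) = 1 := by
  rw [← coeff_zero_eq_constantCoeff_apply, coeff_negBinomialSeries, prod_range_zero]

lemma coeff_lambertTerm (i j : ℕ) :
    coeff j (lambertTerm i : K⟦X⟧) = if i + 1 ∈ j.divisors then ((i + 1 : ℕ) : K) else 0 := by
  rw [lambertTerm, mul_assoc, coeff_C_mul, coeff_X_pow_mul']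
  by_cases hij : i + 1 ≤ j
  · obtain ⟨k, rfl⟩ := Nat.exists_eq_add_of_le hij
    simp [coeff_expand, Nat.dvd_add_self_left, Nat.mem_divisors]
  · have : i + 1 ∉ j.divisors := fun h => hij (Nat.divisor_le h)
    simp [hij, this]

lemma coeff_sum_lambertTerm {N j : ℕ} (h : j ≤ N) :
    coeff j (∑ i ∈ range N, lambertTerm i : K⟦X⟧) = ∑ d ∈ j.divisors, (d : K) := by
  have hsub : j.divisors ⊆ Ico 1 (N + 1) := fun d hd =>
    mem_Ico.2 ⟨Nat.pos_of_mem_divisors hd, by have := Nat.divisor_le hd; omega⟩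
  simp only [map_sum, coeff_lambertTerm]
  rw [range_eq_Ico, sum_Ico_add' (fun d => if d ∈ j.divisors then (d : K) else 0),
    sum_ite_mem, inter_eq_right.2 hsub]

lemma constantCoeff_prod_eulerFactor (x : K) (N : ℕ) :
    constantCoeff (∏ i ∈ range N, eulerFactor x i) = 1 := by
  rw [map_prod]
  refine prod_eq_one fun i _ => ?_
  rw [eulerFactor, constantCoeff_expand, constantCoeff_negBinomialSeries]

variable [CharZero K]

lemma succ_mul_coeff_succ_negBinomialSeries (x : K) (k : ℕ) :
    ((k : K) + 1) * coeff (k + 1) (negBinomialSeries x) =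
      (x + k) * coeff k (negBinomialSeries x) := by
  rw [coeff_negBinomialSeries, coeff_negBinomialSeries, prod_range_succ]
  field_simp

lemma derivative_negBinomialSeries (x : K) :
    d⁄dX K (negBinomialSeries x) = C x * mk 1 * negBinomialSeries x := by
  have h : (1 - X) * d⁄dX K (negBinomialSeries x) = C x * negBinomialSeries x := by
    ext k
    rcases k with _ | k
    · simp [sub_mul, coeff_zero_X_mul, coeff_derivative, coeff_negBinomialSeries,
        -coeff_zero_eq_constantCoeff]
    · simp only [sub_mul, one_mul, map_sub, coeff_succ_X_mul, coeff_derivative, coeff_C_mul]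
      have h := succ_mul_coeff_succ_negBinomialSeries x (k + 1)
      push_cast at h ⊢
      linear_combination h
  calc d⁄dX K (negBinomialSeries x)
      = mk 1 * (1 - X) * d⁄dX K (negBinomialSeries x) := by
        rw [mk_one_mul_one_sub_eq_one, one_mul]
    _ = C x * mk 1 * negBinomialSeries x := by rw [mul_assoc, h]; ring

lemma X_mul_derivative_eulerFactor (x : K) (i : ℕ) :
    X * d⁄dX K (eulerFactor x i) = C x * lambertTerm i * eulerFactor x i := by
  rw [eulerFactor, lambertTerm, derivative_expand, derivative_negBinomialSeries, map_mul, map_mul,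
    expand_C, Nat.add_sub_cancel]
  ring

lemma succ_mul_coeff_succ_prod_eulerFactor (x : K) {N j : ℕ} (h : j + 1 ≤ N) :
    ((j : K) + 1) * coeff (j + 1) (∏ i ∈ range N, eulerFactor x i) =
      x * ∑ k ∈ range (j + 1), (∑ d ∈ (k + 1).divisors, (d : K)) *
        coeff (j - k) (∏ i ∈ range N, eulerFactor x i) := by
  have hG := congrArg (coeff (j + 1)) <| X_mul_derivative_prod (range N) (eulerFactor x)
    lambertTerm (C x) fun i _ => X_mul_derivative_eulerFactor x i
  rw [coeff_succ_X_mul, coeff_derivative, mul_assoc, coeff_C_mul, coeff_mul,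
    Nat.sum_antidiagonal_succ, Nat.sum_antidiagonal_eq_sum_range_succ_mk,
    coeff_sum_lambertTerm (by omega), Nat.divisors_zero, sum_empty, zero_mul, zero_add] at hG
  rw [mul_comm, hG]
  congr 1
  refine sum_congr rfl fun k hk => ?_
  rw [coeff_sum_lambertTerm (by simp at hk; omega)]

theorem coeff_prod_eulerFactor_eq_aeval_darcais (x : K) {N j : ℕ} (h : j ≤ N) :
    coeff j (∏ i ∈ range N, eulerFactor x i) = Polynomial.aeval x (darcais j) := by
  induction j using Nat.strong_induction_on with
  | _ j ih =>
    rcases j with _ | j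
    · rw [darcais, coeff_zero_eq_constantCoeff_apply, constantCoeff_prod_eulerFactor, map_one]
    · have hrec := succ_mul_coeff_succ_prod_eulerFactor x h
      rw [darcais]
      simp only [map_mul, Polynomial.aeval_C, Polynomial.aeval_X, map_sum, map_smul, map_inv₀,
        map_add, map_natCast, map_one]
      have hsum : ∀ k ∈ range (j + 1), ((∑ d ∈ (k + 1).divisors, d : ℕ) : ℚ) •
          Polynomial.aeval x (darcais (j - k)) = (∑ d ∈ (k + 1).divisors, (d : K)) *
            coeff (j - k) (∏ i ∈ range N, eulerFactor x i) := fun k hk => by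
        rw [mem_range] at hk
        rw [ih (j - k) (by omega) (by omega), Nat.cast_smul_eq_nsmul, nsmul_eq_mul,
          Nat.cast_sum]
      rw [sum_congr rfl hsum, mul_assoc, ← hrec]
      field_simp

end Euler

section PiTopology

variable {R : Type*} [CommRing R] [TopologicalSpace R]

lemma hasSum_expand (p : ℕ) (hp : p ≠ 0) (φ : R⟦X⟧) :
    HasSum (fun j => coeff j φ • X ^ (p * j)) (expand p hp φ) := by
  rw [WithPiTopology.hasSum_iff_hasSum_coeff]
  intro d
  simp only [coeff_smul, coeff_X_pow, coeff_expand, smul_eq_mul, mul_ite, mul_one, mul_zero]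
  split_ifs with hd
  · obtain ⟨k, rfl⟩ := hd
    convert hasSum_single k fun j hj => if_neg fun h => hj (Nat.eq_of_mul_eq_mul_left
      (Nat.pos_of_ne_zero hp) h).symm using 1
    simp [Nat.mul_div_cancel_left _ (Nat.pos_of_ne_zero hp)]
  · exact hasSum_zero.congr_fun fun j => if_neg fun h => hd ⟨j, h⟩

lemma coeff_eq_coeff_prod_range_of_hasProd [T2Space R] {f : ℕ → R⟦X⟧} {g : R⟦X⟧}
    (hf : HasProd f g) (hX : ∀ i, X ^ (i + 1) ∣ f i - 1) {d N : ℕ} (h : d ≤ N) :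
    coeff d g = coeff d (∏ i ∈ range N, f i) := by
  refine tendsto_nhds_unique ((WithPiTopology.continuous_coeff R d).tendsto g |>.comp hf)
    (tendsto_atTop_of_eventually_const (i₀ := range N) fun s hs => ?_)
  have htail : X ^ (N + 1) ∣ ∏ i ∈ s \ range N, f i - 1 := by
    refine prod_induction _ (fun a => X ^ (N + 1) ∣ a - 1) (fun a b ha hb => ?_) (by simp)
      fun i hi => (pow_dvd_pow X ?_).trans (hX i)
    · have : a * b - 1 = a * (b - 1) + (a - 1) := by ring
      rw [this]
      exact dvd_add (dvd_mul_of_dvd_right hb a) ha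
    · rw [mem_sdiff, mem_range] at hi
      omega
  obtain ⟨q, hq⟩ := htail
  rw [Function.comp_apply, ← prod_sdiff hs, sub_eq_iff_eq_add.1 hq, add_mul, one_mul, map_add,
    mul_assoc, coeff_X_pow_mul', if_neg (by omega), zero_add]

lemma one_add_tsum_eq_expand [IsTopologicalRing R] [T2Space R] (p : ℕ) (hp : p ≠ 0)
    {φ : R⟦X⟧} (hφ : constantCoeff φ = 1) :
    1 + ∑' j, coeff (j + 1) φ • X ^ (p * (j + 1)) = expand p hp φ := by
  rw [((hasSum_nat_add_iff' 1).2 (hasSum_expand p hp φ)).tsum_eq]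
  simp [hφ]

end PiTopology

theorem sum_toFinsupp_prod_coeff_negBinomialSeries {K : Type*} [Field K] [CharZero K] (x : K)
    (n : ℕ) :
    ∑ ν : n.Partition, ν.parts.toFinsupp.prod (fun _ c => coeff c (negBinomialSeries x)) =
      Polynomial.aeval x (darcais n) := by
  -- Any Hausdorff topology gives access to `Nat.Partition.hasProd_genFun`.
  let _ : TopologicalSpace K := ⊥
  have _ : DiscreteTopology K := ⟨rfl⟩
  have hprod : HasProd (eulerFactor x)
      (Nat.Partition.genFun fun _ c => coeff c (negBinomialSeries x)) :=
    (Nat.Partition.hasProd_genFun _).congr_fun fun i =>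
      (one_add_tsum_eq_expand _ i.succ_ne_zero (constantCoeff_negBinomialSeries x)).symm
  rw [← Nat.Partition.coeff_genFun, coeff_eq_coeff_prod_range_of_hasProd hprod
    (fun i => X_pow_dvd_expand_sub_one _ _ (constantCoeff_negBinomialSeries x)) le_rfl]
  exact coeff_prod_eulerFactor_eq_aeval_darcais x le_rfl

end PowerSeries

lemma prod_map_hooksDia_eq_toFinsupp_prod_conjugate {K : Type*} [Field K] {n : ℕ}
    (μ : n.Partition) (z : K) :
    ((hooksDia μ).map fun h : ℕ => ((h : K) + z) / h).prod =
      (conjugate μ).parts.toFinsupp.prod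
        fun _ c => PowerSeries.coeff c (PowerSeries.negBinomialSeries (z + 1)) := by
  rw [prod_map_hooksDia, toFinsupp_prod_eq_prod_range_count _ _ (by
    rw [PowerSeries.coeff_negBinomialSeries, prod_range_zero])]
  refine prod_congr rfl fun i _ => ?_
  rw [count_succ_conjugate_parts, PowerSeries.coeff_negBinomialSeries]
  refine prod_congr rfl fun t _ => ?_
  push_cast
  ring

theorem hook_trivial_leg_eq_darcais_general (n : ℕ) (z : ℂ) :
    ∑ μ : Nat.Partition n, ((hooksDia μ).map (fun h => ((h : ℂ) + z) / (h : ℂ))).prod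
      = Polynomial.aeval (z + 1) (darcais n) := by
  let w : ℕ → ℕ → ℂ := fun _ c => PowerSeries.coeff c (PowerSeries.negBinomialSeries (z + 1))
  have hcast : ∀ s : Multiset ℕ, (do let a ← s; pure (a : ℂ)) = s.map (↑) :=
    fun s => bind_pure_comp _ s
  simp only [hcast, Multiset.map_map, Function.comp_def]
  calc _ = ∑ μ : n.Partition, (conjugate μ).parts.toFinsupp.prod w :=
        sum_congr rfl fun μ _ => prod_map_hooksDia_eq_toFinsupp_prod_conjugate μ z
    _ = ∑ ν : n.Partition, ν.parts.toFinsupp.prod w :=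
        Fintype.sum_bijective _ conjugate_injective.bijective_of_finite _ _ fun _ => rfl
    _ = Polynomial.aeval (z + 1) (darcais n) :=
        PowerSeries.sum_toFinsupp_prod_coeff_negBinomialSeries (z + 1) n

/-- (Amdeberhan's Conjecture 1, proved in the paper.)  For every positive
integer `n` and every complex `z`,
`∑_{λ⊢n} ∏_{h ∈ H(λ)^⋄} (h+z)/h = P_n(z+1)`,
where `H(λ)^⋄` is the multiset of hook lengths of cells with trivial leg and
`P_n` is the `n`-th D'Arcais polynomial. -/
theorem hook_trivial_leg_eq_darcais (n : ℕ) (hn : 1 ≤ n) (z : ℂ) :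
    ∑ μ : Nat.Partition n, ((hooksDia μ).map (fun h => ((h : ℂ) + z) / (h : ℂ))).prod
      = Polynomial.aeval (z + 1) (darcais n) :=
  hook_trivial_leg_eq_darcais_general n z
end

section
/- The polynomial R(x) = x^8 + 134x^7 + 6496x^6 + 147854x^5 + 1709659x^4 + 10035116x^3 + 28014804x^2 + 29758896x + 6531840 has exactly six real roots, each of which is simple; consequently R has exactly two non-real complex roots (a conjugate pair). -/
/-!
`R` changes sign between consecutive points of `-59 < -40 < -20 < -15 < -5 < -1 < 0`, so it has
at least six distinct real roots. Conversely `R(-11/2) ≠ 0`, and Descartes' rule of signs applied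
to `R(-11/2 - x)` and to `(x + 1) R(x - 11/2)` shows that, counted with multiplicity, at most four
roots lie below `-11/2` and at most two above it. So the real roots are exactly six and simple,
and the two remaining complex roots are non-real and, `R` being real, conjugate.
-/

open Finset Polynomial

/-- The degree-8 factor `R(x)` in the factorization `P₁₀(x) = (x/10!)(x+1)R(x)`
of the 10th D'Arcais polynomial. -/
noncomputable def Rpoly : Polynomial ℝ :=
  X ^ 8 + C 134 * X ^ 7 + C 6496 * X ^ 6 + C 147854 * X ^ 5 + C 1709659 * X ^ 4 +
    C 10035116 * X ^ 3 + C 28014804 * X ^ 2 + C 29758896 * X + C 6531840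

namespace Polynomial

section Descartes

variable {R : Type*} [CommRing R] [LinearOrder R] [IsStrictOrderedRing R]

theorem countP_roots_gt_le_signVariations_mul_comp (p g : R[X]) (hg : g ≠ 0) (c : R) :
    p.roots.countP (c < ·) ≤ (g * p.comp (X + C c)).signVariations := by
  rcases eq_or_ne p 0 with rfl | hp
  · simp
  calc p.roots.countP (c < ·) = (p.comp (X + C c)).roots.countP (0 < ·) := by
        rw [show X + C c = C 1 * X + C c by simp, roots_comp_C_mul_X_add_C p 1 c isUnit_one,
          Multiset.countP_map, Multiset.countP_eq_card_filter]
        simp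
    _ ≤ (g * p.comp (X + C c)).roots.countP (0 < ·) := by
        rw [roots_mul (mul_ne_zero hg (comp_X_add_C_ne_zero_iff.mpr hp)), Multiset.countP_add]
        exact Nat.le_add_left _ _
    _ ≤ _ := roots_countP_pos_le_signVariations _

theorem countP_roots_lt_le_signVariations_comp (p : R[X]) (c : R) :
    p.roots.countP (· < c) ≤ (p.comp (C c - X)).signVariations := by
  have h := countP_roots_gt_le_signVariations_mul_comp (p.comp (-X)) 1 one_ne_zero (-c)
  rw [one_mul, comp_assoc, roots_comp_neg_X, Multiset.countP_map, neg_comp, X_comp,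
    neg_add, ← C_neg, neg_neg, neg_add_eq_sub, ← Multiset.countP_eq_card_filter] at h
  simpa only [neg_lt_neg_iff] using h

theorem card_roots_le_signVariations_add (p g : R[X]) (hg : g ≠ 0) {c : R} (hc : ¬p.IsRoot c) :
    p.roots.card ≤ (p.comp (C c - X)).signVariations + (g * p.comp (X + C c)).signVariations := by
  have hgt : p.roots.countP (fun x => ¬x < c) = p.roots.countP (c < ·) :=
    Multiset.countP_congr rfl fun x hx => by
      rw [not_lt, (ne_of_mem_of_not_mem hx fun h => hc (isRoot_of_mem_roots h)).symm.le_iff_lt]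
  rw [Multiset.card_eq_countP_add_countP (· < c), hgt]
  exact add_le_add (countP_roots_lt_le_signVariations_comp p c)
    (countP_roots_gt_le_signVariations_mul_comp p g hg c)

end Descartes

theorem exists_isRoot_mem_Ioo_of_eval_mul_neg {p : ℝ[X]} {a b : ℝ} (hab : a < b)
    (h : p.eval a * p.eval b < 0) : ∃ r ∈ Set.Ioo a b, p.IsRoot r := by
  have hcont := p.continuous.continuousOn (s := Set.Icc a b)
  rcases mul_neg_iff.mp h with ⟨ha, hb⟩ | ⟨ha, hb⟩
  · exact intermediate_value_Ioo' hab.le hcont ⟨hb, ha⟩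
  · exact intermediate_value_Ioo hab.le hcont ⟨ha, hb⟩

theorem le_card_roots_toFinset_of_alternating {p : ℝ[X]} {n : ℕ} {x : Fin (n + 1) → ℝ}
    (hx : StrictMono x) (hsign : ∀ i : Fin n, p.eval (x i.castSucc) * p.eval (x i.succ) < 0) :
    n ≤ p.roots.toFinset.card := by
  rcases Nat.eq_zero_or_pos n with rfl | hn
  · exact Nat.zero_le _
  have hp : p ≠ 0 := fun h => by simpa [h] using hsign ⟨0, hn⟩
  choose r hr hroot using fun i =>
    exists_isRoot_mem_Ioo_of_eval_mul_neg (hx (Fin.castSucc_lt_succ (i := i))) (hsign i)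
  have hr_mono : StrictMono r := fun i j hij =>
    calc r i < x i.succ := (hr i).2
      _ ≤ x j.castSucc := hx.monotone (Fin.succ_le_castSucc_iff.mpr hij)
      _ < r j := (hr j).1
  simpa using Finset.card_le_card_of_injOn (s := Finset.univ) r
    (fun i _ => Multiset.mem_toFinset.mpr ((mem_roots hp).mpr (hroot i))) hr_mono.injective.injOn

theorem conj_mem_roots_map_algebraMap {p : ℝ[X]} {z : ℂ}
    (hz : z ∈ (p.map (algebraMap ℝ ℂ)).roots) :
    starRingEnd ℂ z ∈ (p.map (algebraMap ℝ ℂ)).roots := by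
  rw [← aroots_def, mem_aroots] at hz ⊢
  exact ⟨hz.1, by simpa [hz.2] using aeval_algHom_apply Complex.conjAe z p⟩

theorem filter_im_eq_zero_roots_map_algebraMap (p : ℝ[X]) :
    (p.map (algebraMap ℝ ℂ)).roots.filter (·.im = 0) = p.roots.map (↑) := by
  ext z
  by_cases hz : z.im = 0
  · obtain ⟨r, rfl⟩ : ∃ r : ℝ, (r : ℂ) = z := ⟨z.re, Complex.ext rfl hz.symm⟩
    rw [Multiset.count_filter_of_pos (p := fun w : ℂ => w.im = 0) hz, count_roots,
      ← Complex.coe_algebraMap, ← eq_rootMultiplicity_map (algebraMap ℝ ℂ).injective,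
      ← count_roots, Multiset.count_map_eq_count' _ _ (algebraMap ℝ ℂ).injective]
  · rw [Multiset.count_filter_of_neg (p := fun w : ℂ => w.im = 0) hz, eq_comm,
      Multiset.count_eq_zero]
    intro hmem
    obtain ⟨r, -, rfl⟩ := Multiset.mem_map.mp hmem
    exact hz (Complex.ofReal_im r)

theorem card_filter_im_ne_zero_roots_map_algebraMap (p : ℝ[X]) :
    ((p.map (algebraMap ℝ ℂ)).roots.filter (·.im ≠ 0)).card = p.natDegree - p.roots.card := by
  have hsplit := Multiset.card_eq_countP_add_countP (·.im = 0) (p.map (algebraMap ℝ ℂ)).roots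
  rw [← (IsAlgClosed.splits _).natDegree_eq_card_roots, natDegree_map,
    Multiset.countP_eq_card_filter, filter_im_eq_zero_roots_map_algebraMap, Multiset.card_map,
    Multiset.countP_eq_card_filter] at hsplit
  simp only [ne_eq]
  omega

end Polynomial

theorem Rpoly_eval (x : ℝ) : Rpoly.eval x = x ^ 8 + 134 * x ^ 7 + 6496 * x ^ 6 + 147854 * x ^ 5 +
    1709659 * x ^ 4 + 10035116 * x ^ 3 + 28014804 * x ^ 2 + 29758896 * x + 6531840 := by
  simp [Rpoly]

theorem Rpoly_natDegree : Rpoly.natDegree = 8 := by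
  unfold Rpoly
  compute_degree!

theorem Rpoly_comp_sub_X : Rpoly.comp (C (-11 / 2) - X) =
    X ^ 8 - C 90 * X ^ 7 + C 2184 * X ^ 6 - C (18585 / 2) * X ^ 5 - C (1000083 / 8) * X ^ 4 +
      C (3657465 / 8) * X ^ 3 + C (20181853 / 8) * X ^ 2 + C (13779405 / 32) * X +
      C (328247325 / 256) := by
  refine Polynomial.funext fun x => ?_
  simp [Rpoly_eval]
  ring

/- The non-real roots `-5.46… ± 0.71…i` lie close to `-11/2`, so the coefficients of
`R(x - 11/2)` have two sign changes too many; the multiplier `x + 1`, which adds no positive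
root, removes them. -/
theorem X_add_one_mul_Rpoly_comp : (X + 1) * Rpoly.comp (X + C (-11 / 2)) =
    X ^ 9 + C 91 * X ^ 8 + C 2274 * X ^ 7 + C (22953 / 2) * X ^ 6 - C (925743 / 8) * X ^ 5 -
      C (1164387 / 2) * X ^ 4 + C (4131097 / 2) * X ^ 3 + C (66948007 / 32) * X ^ 2 +
      C (218012085 / 256) * X + C (328247325 / 256) := by
  refine Polynomial.funext fun x => ?_
  simp [Rpoly_eval]
  ring

theorem signVariations_Rpoly_comp_sub_X : (Rpoly.comp (C (-11 / 2) - X)).signVariations = 4 := by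
  have hdeg : (Rpoly.comp (C (-11 / 2) - X)).degree = 8 := by
    rw [Rpoly_comp_sub_X]
    compute_degree!
  rw [signVariations, coeffList, hdeg, Rpoly_comp_sub_X]
  simp [List.range_succ, coeff_X, coeff_C, coeff_X_pow]
  norm_num [List.destutter, List.destutter']

theorem signVariations_X_add_one_mul_Rpoly_comp :
    ((X + 1) * Rpoly.comp (X + C (-11 / 2))).signVariations = 2 := by
  have hdeg : ((X + 1) * Rpoly.comp (X + C (-11 / 2))).degree = 9 := by
    rw [X_add_one_mul_Rpoly_comp]
    compute_degree!
  rw [signVariations, coeffList, hdeg, X_add_one_mul_Rpoly_comp]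
  simp [List.range_succ, coeff_X, coeff_C, coeff_X_pow]
  norm_num [List.destutter, List.destutter']

theorem Rpoly_roots_card_le : Rpoly.roots.card ≤ 6 := by
  have h := card_roots_le_signVariations_add Rpoly (X + 1) (X_add_C_ne_zero 1)
    (c := -11 / 2) (by norm_num [Rpoly_eval])
  rwa [signVariations_Rpoly_comp_sub_X, signVariations_X_add_one_mul_Rpoly_comp] at h

theorem six_le_Rpoly_roots_toFinset_card : 6 ≤ Rpoly.roots.toFinset.card :=
  le_card_roots_toFinset_of_alternating (x := ![-59, -40, -20, -15, -5, -1, 0])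
    (Fin.strictMono_iff_lt_succ.mpr fun i => by fin_cases i <;> simp <;> norm_num)
    (fun i => by fin_cases i <;> simp <;> norm_num [Rpoly_eval])

/-- `R(x)` has exactly six real roots, all simple; consequently, over `ℂ` it
has exactly two non-real roots, which form a conjugate pair. -/
theorem Rpoly_six_real_roots :
    Rpoly.roots.card = 6 ∧ Rpoly.roots.Nodup ∧
    ((Rpoly.map (algebraMap ℝ ℂ)).roots.filter fun z => z.im ≠ 0).card = 2 ∧
    ∀ z ∈ (Rpoly.map (algebraMap ℝ ℂ)).roots, z.im ≠ 0 →
      (starRingEnd ℂ) z ∈ (Rpoly.map (algebraMap ℝ ℂ)).roots := by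
  have hcard : Rpoly.roots.card = 6 := Rpoly_roots_card_le.antisymm
    (six_le_Rpoly_roots_toFinset_card.trans (Multiset.toFinset_card_le _))
  have hnodup : Rpoly.roots.Nodup := Multiset.toFinset_card_eq_card_iff_nodup.mp
    ((Multiset.toFinset_card_le _).antisymm (hcard ▸ six_le_Rpoly_roots_toFinset_card))
  refine ⟨hcard, hnodup, ?_, fun z hz _ => conj_mem_roots_map_algebraMap hz⟩
  rw [card_filter_im_ne_zero_roots_map_algebraMap, Rpoly_natDegree, hcard]
end

section
/- The 10th D'Arcais polynomial P_10(x) has a non-real complex root. Consequently, the polynomial Q_10(z) := Σ_{λ⊢10} Π_{h∈H(λ)} (h²+z)/h² = P_10(z+1) has a non-real complex root, giving a counterexample to the assertion that Q_n has only real roots for all n. -/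
/-!
If every complex root of a real polynomial `p` is real, then `p p'' ≤ p'²` on `ℝ` (Laguerre):
for `p = c ∏ (X - a)` one has `p'² - p p'' = p² ∑ 1 / (x - a)²`, or, without dividing,
`W((X - a) q) = q² + (X - a)² W(q)` for `W(q) = q'² - q q''`. At `x = -6` the D'Arcais
polynomial violates this: `P₁₀ = 18`, `P₁₀' = -27983/840`, `P₁₀'' = 1778633/25200`.

Both `Q₁₀` and `P₁₀(X + 1)` have degree at most `10` (a partition of `n` has `n` cells), so
they agree once they agree at `z = 0, …, 10`. Those eleven values, and the coefficients of
`P₁₀`, are obtained by kernel evaluation of a computable copy of the D'Arcais recursion and of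
an enumeration of the partitions of `10`.
-/

open Finset Polynomial

namespace Polynomial

variable {R : Type*} [CommSemiring R]

noncomputable def ofCoeffs : List R → R[X]
  | [] => 0
  | a :: l => C a + X * ofCoeffs l

def addCoeffs : List R → List R → List R
  | [], l => l
  | l, [] => l
  | a :: l, b :: l' => (a + b) :: addCoeffs l l'

def evalCoeffs (x : R) (l : List R) : R := l.foldr (fun a acc => a + x * acc) 0

@[simp] lemma ofCoeffs_nil : ofCoeffs ([] : List R) = 0 := rfl

@[simp] lemma ofCoeffs_cons (a : R) (l : List R) : ofCoeffs (a :: l) = C a + X * ofCoeffs l := rfl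

lemma ofCoeffs_addCoeffs : ∀ l l' : List R, ofCoeffs (addCoeffs l l') = ofCoeffs l + ofCoeffs l'
  | [], l' => by simp [addCoeffs]
  | a :: l, [] => by simp [addCoeffs]
  | a :: l, b :: l' => by
    simp only [addCoeffs, ofCoeffs_cons, ofCoeffs_addCoeffs l l', C_add]
    ring

lemma ofCoeffs_foldr_addCoeffs (L : List (List R)) :
    ofCoeffs (L.foldr addCoeffs []) = (L.map ofCoeffs).sum := by
  induction L with
  | nil => rfl
  | cons l L ih => simp [ofCoeffs_addCoeffs, ih]

lemma ofCoeffs_map_mul (c : R) : ∀ l : List R, ofCoeffs (l.map (c * ·)) = C c * ofCoeffs l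
  | [] => by simp
  | a :: l => by
    simp only [List.map_cons, ofCoeffs_cons, ofCoeffs_map_mul c l, C_mul, mul_add]
    ring

lemma eval_ofCoeffs (x : R) (l : List R) : (ofCoeffs l).eval x = evalCoeffs x l := by
  induction l with
  | nil => simp [evalCoeffs]
  | cons a l ih => simp [evalCoeffs, ih]

lemma derivative_sq_sub_mul_derivative_derivative_X_sub_C_mul {R : Type*} [CommRing R] (a : R)
    (q : R[X]) :
    derivative ((X - C a) * q) ^ 2 - (X - C a) * q * derivative (derivative ((X - C a) * q)) =
      q ^ 2 + (X - C a) ^ 2 * (derivative q ^ 2 - q * derivative (derivative q)) := by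
  simp only [derivative_mul, derivative_add, derivative_sub, derivative_X, derivative_C,
    derivative_one, derivative_zero]
  ring

variable {K : Type*} [Field K] [LinearOrder K] [IsStrictOrderedRing K]

lemma eval_mul_eval_derivative_derivative_prod_X_sub_C_le (s : Multiset K) (x : K) :
    (s.map (X - C ·)).prod.eval x * (s.map (X - C ·)).prod.derivative.derivative.eval x ≤
      (s.map (X - C ·)).prod.derivative.eval x ^ 2 := by
  induction s using Multiset.induction with
  | empty => simp
  | cons a s ih =>
    simp only [Multiset.map_cons, Multiset.prod_cons]
    set q := (s.map (X - C ·)).prod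
    have h := congrArg (eval x) (derivative_sq_sub_mul_derivative_derivative_X_sub_C_mul a q)
    simp only [eval_sub, eval_mul, eval_pow, eval_add, eval_X, eval_C] at h ⊢
    linarith [sq_nonneg (q.eval x), mul_nonneg (sq_nonneg (x - a)) (sub_nonneg.2 ih)]

theorem Splits.eval_mul_eval_derivative_derivative_le {p : K[X]} (hp : p.Splits) (x : K) :
    p.eval x * p.derivative.derivative.eval x ≤ p.derivative.eval x ^ 2 := by
  rw [hp.eq_prod_roots]
  simp only [derivative_C_mul, eval_mul, eval_C]
  nlinarith [eval_mul_eval_derivative_derivative_prod_X_sub_C_le p.roots x,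
    sq_nonneg p.leadingCoeff]

end Polynomial

lemma exists_nonreal_root_of_eval_derivative_sq_lt {p : ℝ[X]} {x : ℝ}
    (h : p.derivative.eval x ^ 2 < p.eval x * p.derivative.derivative.eval x) :
    ∃ z : ℂ, z.im ≠ 0 ∧ aeval z p = 0 := by
  by_contra! hreal
  refine h.not_ge (Splits.eval_mul_eval_derivative_derivative_le ?_ x)
  refine Splits.of_splits_map (algebraMap ℝ ℂ) (IsAlgClosed.splits _) fun z hz => ⟨z.re, ?_⟩
  have hroot : aeval z p = 0 := by
    rw [mem_roots', IsRoot.def, eval_map_algebraMap] at hz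
    exact hz.2
  have him : z.im = 0 := by_contra fun him => hreal z him hroot
  exact Complex.ext (by simp) (by simp [him])

namespace Nat.Partition

def boundedParts : ℕ → ℕ → List (Multiset ℕ)
  | 0, n => if n = 0 then [0] else []
  | k + 1, n => (List.range (n / (k + 1) + 1)).flatMap fun j =>
      (boundedParts k (n - j * (k + 1))).map (Multiset.replicate j (k + 1) + ·)

lemma mem_boundedParts {k n : ℕ} {m : Multiset ℕ} :
    m ∈ boundedParts k n ↔ (∀ i ∈ m, 0 < i ∧ i ≤ k) ∧ m.sum = n := by
  induction k generalizing n m with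
  | zero =>
    have : (∀ i ∈ m, 0 < i ∧ i ≤ 0) ↔ m = 0 :=
      ⟨fun h => Multiset.eq_zero_of_forall_notMem fun i hi => by grind, by simp +contextual⟩
    rw [this]
    rcases eq_or_ne n 0 with rfl | hn
    · simp +contextual [boundedParts]
    · simp only [boundedParts, hn, if_false, List.not_mem_nil, false_iff, not_and]
      rintro rfl
      exact hn.symm
  | succ k ih =>
    simp only [boundedParts, List.mem_flatMap, List.mem_range, List.mem_map, ih]
    constructor
    · rintro ⟨j, hj, m', ⟨hparts, hsum⟩, rfl⟩
      have hle : j * (k + 1) ≤ n := (Nat.le_div_iff_mul_le (by omega)).1 (by omega)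
      refine ⟨fun i hi => ?_, ?_⟩
      · rcases Multiset.mem_add.1 hi with hi | hi
        · rw [Multiset.eq_of_mem_replicate hi]; omega
        · have := hparts i hi; omega
      · rw [Multiset.sum_add, Multiset.sum_replicate, hsum, smul_eq_mul]; omega
    · rintro ⟨hparts, rfl⟩
      set j := m.count (k + 1)
      have hsplit : Multiset.replicate j (k + 1) + m.filter (· ≠ k + 1) = m := by
        rw [← Multiset.filter_eq', Multiset.filter_add_not]
      have hsum := congrArg Multiset.sum hsplit
      rw [Multiset.sum_add, Multiset.sum_replicate, smul_eq_mul] at hsum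
      refine ⟨j, ?_, m.filter (· ≠ k + 1), ⟨fun i hi => ?_, by omega⟩, hsplit⟩
      · exact Nat.lt_succ_of_le ((Nat.le_div_iff_mul_le (by omega)).2 (by omega))
      · obtain ⟨hi, hne⟩ := Multiset.mem_filter.1 hi
        have := hparts i hi; omega

lemma nodup_boundedParts (k n : ℕ) : (boundedParts k n).Nodup := by
  induction k generalizing n with
  | zero => by_cases hn : n = 0 <;> simp [boundedParts, hn]
  | succ k ih =>
    have hcount : ∀ j n', ∀ m' ∈ boundedParts k n',
        (Multiset.replicate j (k + 1) + m').count (k + 1) = j := by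
      intro j n' m' hm'
      rw [Multiset.count_add, Multiset.count_replicate_self,
        Multiset.count_eq_zero.2 fun h => ?_, add_zero]
      have := (mem_boundedParts.1 hm').1 _ h
      omega
    refine List.nodup_flatMap.2 ⟨fun j _ => (ih _).map (add_right_injective _), ?_⟩
    refine (List.nodup_range).pairwise_of_forall_ne fun j _ j' _ hne => ?_
    simp only [Function.onFun, List.disjoint_left, List.mem_map]
    rintro _ ⟨m', hm', rfl⟩ ⟨m'', hm'', heq⟩
    exact hne (by rw [← hcount j _ m' hm', ← heq, hcount j' _ m'' hm''])

def list (n : ℕ) : List (Partition n) :=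
  (boundedParts n n).pmap (fun m hm => ⟨m, fun hi => (hm.1 _ hi).1, hm.2⟩)
    fun _ => mem_boundedParts.1

lemma mem_list {n : ℕ} (μ : Partition n) : μ ∈ list n :=
  List.mem_pmap.2 ⟨μ.parts, mem_boundedParts.2
    ⟨fun _ hi => ⟨μ.parts_pos hi, le_of_mem_parts hi⟩, μ.parts_sum⟩, rfl⟩

lemma nodup_list (n : ℕ) : (list n).Nodup :=
  (nodup_boundedParts n n).pmap fun _ _ _ _ h => congrArg parts h

lemma sum_eq_sum_list {M : Type*} [AddCommMonoid M] {n : ℕ} (f : Partition n → M) :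
    ∑ μ, f μ = ((list n).map f).sum := by
  rw [← List.sum_toFinset f (nodup_list n)]
  congr
  exact (Finset.eq_univ_of_forall fun μ => List.mem_toFinset.2 (mem_list μ)).symm

end Nat.Partition

lemma card_filter_range_lt {a n : ℕ} (h : a ≤ n) : ((range n).filter (· < a)).card = a := by
  rw [show (range n).filter (· < a) = range a by ext; simp; omega, card_range]

lemma sum_range_card_filter_lt {n : ℕ} (m : Multiset ℕ) (hm : ∀ p ∈ m, p ≤ n) :
    ∑ j ∈ range n, (m.filter (j < ·)).card = m.sum := by
  induction m using Multiset.induction with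
  | empty => simp
  | cons a m ih =>
    simp only [Multiset.mem_cons, forall_eq_or_imp] at hm
    simp only [Multiset.filter_cons, Multiset.card_add, apply_ite Multiset.card,
      Multiset.card_singleton, Multiset.card_zero, sum_add_distrib, ih hm.2, Multiset.sum_cons]
    rw [sum_ite, sum_const_zero, add_zero, sum_const, smul_eq_mul, mul_one,
      card_filter_range_lt hm.1]

lemma card_cells {n : ℕ} (μ : Nat.Partition n) : (cells μ).card = n := by
  have hcol : ∀ j, colLen μ j ≤ n := fun j =>
    calc colLen μ j ≤ μ.parts.card := Multiset.card_le_card (Multiset.filter_le _ _)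
      _ = μ.parts.card • 1 := by simp
      _ ≤ μ.parts.sum := Multiset.card_nsmul_le_sum fun _ hi => μ.parts_pos hi
      _ = n := μ.parts_sum
  rw [cells, card_filter, sum_product_right]
  simp_rw [← card_filter, card_filter_range_lt (hcol _)]
  exact (sum_range_card_filter_lt μ.parts fun _ => Nat.Partition.le_of_mem_parts).trans
    μ.parts_sum

/-- `darcaisTable n` lists the coefficients (constant term first) of `P₀, …, Pₙ`; unlike
`darcais` it can be evaluated by the kernel. -/
def darcaisTable : ℕ → List (List ℚ)
  | 0 => [[1]]
  | n + 1 =>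
    let t := darcaisTable n
    t ++ [0 :: ((List.range (n + 1)).map fun j =>
      (t.getD j []).map ((((∑ d ∈ Nat.divisors (n + 1 - j), d : ℕ) : ℚ) / (n + 1)) * ·)).foldr
        addCoeffs []]

lemma darcais_succ (n : ℕ) :
    darcais (n + 1) = X * ∑ j ∈ range (n + 1),
      C (((∑ d ∈ Nat.divisors (n + 1 - j), d : ℕ) : ℚ) / (n + 1)) * darcais j := by
  rw [darcais, ← sum_range_reflect, mul_sum, mul_sum]
  refine sum_congr rfl fun j hj => ?_
  have hj : j < n + 1 := mem_range.mp hj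
  rw [show n + 1 - 1 - j = n - j by omega, show n - (n - j) = j by omega,
    show n - j + 1 = n + 1 - j by omega, smul_eq_C_mul, div_eq_mul_inv, C_mul]
  ring

lemma map_ofCoeffs_darcaisTable (n : ℕ) :
    (darcaisTable n).map ofCoeffs = (List.range (n + 1)).map darcais := by
  induction n with
  | zero => simp [darcaisTable, darcais]
  | succ n ih =>
    have hget : ∀ j < n + 1, ofCoeffs ((darcaisTable n).getD j []) = darcais j := by
      intro j hj
      rw [← List.getD_map (f := ofCoeffs) (d := []), ofCoeffs_nil, ih]
      simp [hj]
    rw [darcaisTable, List.map_append, ih, List.range_succ (n := n + 1), List.map_append]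
    simp only [List.map_cons, List.map_nil, ofCoeffs_cons, C_0, zero_add, ofCoeffs_foldr_addCoeffs,
      List.map_map, Function.comp_def, ofCoeffs_map_mul, darcais_succ]
    rw [Finset.sum_eq_multiset_sum, Finset.range_val, Multiset.range, Multiset.map_coe,
      Multiset.sum_coe]
    congr 4
    exact List.map_congr_left fun j hj => by rw [hget j (List.mem_range.mp hj)]

lemma darcais_eq_ofCoeffs (n : ℕ) : darcais n = ofCoeffs ((darcaisTable n).getD n []) := by
  rw [← List.getD_map (f := ofCoeffs) (d := []), ofCoeffs_nil, map_ofCoeffs_darcaisTable]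
  simp

lemma natDegree_darcais_le (n : ℕ) : (darcais n).natDegree ≤ n := by
  induction n using Nat.strong_induction_on with
  | _ n ih =>
    rcases n with _ | n
    · simp [darcais]
    · rw [darcais_succ]
      refine natDegree_mul_le.trans ?_
      rw [natDegree_X, add_comm]
      refine Nat.add_le_add_right (natDegree_sum_le_of_forall_le _ _ fun j hj => ?_) 1
      exact (natDegree_C_mul_le _ _).trans ((ih j (by simpa using hj)).trans (by simpa using hj))

lemma darcais_ten : darcais 10 = ofCoeffs [0, 9/5, 252019/25200, 64193/4032, 59453/5670,
    7457/2304, 88453/172800, 49/1152, 221/120960, 1/26880, 1/3628800] := by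
  rw [darcais_eq_ofCoeffs]
  congr 1
  decide +kernel

lemma darcais_ten_derivative_sq_lt :
    (darcais 10).derivative.eval (-6) ^ 2 <
      (darcais 10).eval (-6) * (darcais 10).derivative.derivative.eval (-6) := by
  have h0 : (darcais 10).eval (-6) = 18 := by rw [darcais_ten]; norm_num
  have h1 : (darcais 10).derivative.eval (-6) = -27983 / 840 := by rw [darcais_ten]; norm_num
  have h2 : (darcais 10).derivative.derivative.eval (-6) = 1778633 / 25200 := by
    rw [darcais_ten]; norm_num
  rw [h0, h1, h2]
  norm_num

lemma darcais_ten_exists_nonreal_root : ∃ z : ℂ, z.im ≠ 0 ∧ aeval z (darcais 10) = 0 := by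
  have h := exists_nonreal_root_of_eval_derivative_sq_lt
    (p := (darcais 10).map (algebraMap ℚ ℝ)) (x := -6) ?_
  · simpa [aeval_map_algebraMap] using h
  · simp only [derivative_map, eval_map_algebraMap]
    rw [show (-6 : ℝ) = algebraMap ℚ ℝ (-6) by simp,
      aeval_algebraMap_apply_eq_algebraMap_eval, aeval_algebraMap_apply_eq_algebraMap_eval,
      aeval_algebraMap_apply_eq_algebraMap_eval,
      ← map_pow, ← map_mul, eq_ratCast, eq_ratCast, Rat.cast_lt]
    exact darcais_ten_derivative_sq_lt

noncomputable def hookPolynomial (n : ℕ) : ℚ[X] :=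
  ∑ μ : Nat.Partition n,
    ((hooks μ).map fun h : ℕ => C ((h : ℚ) ^ 2)⁻¹ * (X + C ((h : ℚ) ^ 2))).prod

lemma aeval_hookPolynomial {K : Type*} [Field K] [Algebra ℚ K] (n : ℕ) (z : K) :
    aeval z (hookPolynomial n) =
      ∑ μ : Nat.Partition n,
        ((hooks μ).map fun h : ℕ => ((h : K) ^ 2 + z) / (h : K) ^ 2).prod := by
  simp [hookPolynomial, map_multiset_prod, Multiset.map_map, div_eq_inv_mul, add_comm]

lemma natDegree_hookPolynomial_le (n : ℕ) : (hookPolynomial n).natDegree ≤ n := by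
  refine natDegree_sum_le_of_forall_le _ _ fun μ _ => (natDegree_multiset_prod_le _).trans ?_
  rw [Multiset.map_map]
  calc _ ≤ ((hooks μ).map fun _ => 1).sum := Multiset.sum_map_le_sum_map _ _ fun h _ =>
        (natDegree_C_mul_le _ _).trans (natDegree_X_add_C _).le
    _ = n := by simp [hooks, card_cells]

lemma sum_prod_hooks_ten_eq : ∀ k ∈ List.range 11,
    ((Nat.Partition.list 10).map fun μ =>
      ((hooks μ).map fun h : ℕ => ((h : ℚ) ^ 2 + k) / (h : ℚ) ^ 2).prod).sum =
      evalCoeffs ((k : ℚ) + 1) [0, 9/5, 252019/25200, 64193/4032, 59453/5670,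
        7457/2304, 88453/172800, 49/1152, 221/120960, 1/26880, 1/3628800] := by
  decide +kernel

lemma hookPolynomial_ten : hookPolynomial 10 = (darcais 10).comp (X + 1) := by
  have hdeg : ∀ p : ℚ[X], p.natDegree ≤ 10 → p.degree < #(range 11) := fun p hp =>
    (degree_le_of_natDegree_le hp).trans_lt
      (by rw [card_range]; exact_mod_cast Nat.lt_succ_self 10)
  refine eq_of_degrees_lt_of_eval_index_eq (range 11) (v := (Nat.cast : ℕ → ℚ))
    Nat.cast_injective.injOn (hdeg _ (natDegree_hookPolynomial_le 10))
    (hdeg _ (natDegree_comp_le.trans ?_)) fun k hk => ?_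
  · rw [← C_1, natDegree_X_add_C, mul_one]
    exact natDegree_darcais_le 10
  · have h := aeval_hookPolynomial 10 (k : ℚ)
    rw [coe_aeval_eq_eval] at h
    rw [h, Nat.Partition.sum_eq_sum_list,
      sum_prod_hooks_ten_eq k (List.mem_range.2 (mem_range.1 hk)), eval_comp, darcais_ten,
      eval_ofCoeffs]
    simp

/-- The 10th D'Arcais polynomial `P₁₀` has a non-real complex root.
Consequently `Q₁₀(z) = ∑_{λ⊢10} ∏_{h ∈ H(λ)} (h²+z)/h² = P₁₀(z+1)` has a
non-real complex root, a counterexample to the claim that `Qₙ` has only real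
roots. -/
theorem darcais_ten_has_nonreal_root :
    (∃ z : ℂ, z.im ≠ 0 ∧ Polynomial.aeval z (darcais 10) = 0) ∧
    (∃ z : ℂ, z.im ≠ 0 ∧
      ∑ μ : Nat.Partition 10,
          ((hooks μ).map (fun h => ((h : ℂ) ^ 2 + z) / (h : ℂ) ^ 2)).prod = 0) := by
  obtain ⟨w, hw_im, hw⟩ := darcais_ten_exists_nonreal_root
  refine ⟨⟨w, hw_im, hw⟩, w - 1, by simpa using hw_im, ?_⟩
  -- the statement maps over `hooks μ` coerced monadically to `Multiset ℂ`
  simp only [bind_pure_comp, Multiset.fmap_def, Multiset.map_map, Function.comp_def]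
  rw [← aeval_hookPolynomial, hookPolynomial_ten, aeval_comp]
  simpa only [map_add, aeval_X, map_one, sub_add_cancel] using hw
end

section
/- The derivative R′(x) of R(x) = x^8 + 134x^7 + 6496x^6 + 147854x^5 + 1709659x^4 + 10035116x^3 + 28014804x^2 + 29758896x + 6531840 has exactly seven real roots, all simple, with exactly one root in each of the seven open intervals (−53,−52), (−29,−28), (−16,−15), (−11,−10), (−6,−5), (−4,−3), and (−1,0). -/
open Finset Polynomial

lemma Rderiv : Polynomial.derivative Rpoly =
    C 8 * X ^ 7 + C 938 * X ^ 6 + C 38976 * X ^ 5 + C 739270 * X ^ 4 + C 6838636 * X ^ 3 +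
      C 30105348 * X ^ 2 + C 56029608 * X + C 29758896 := by
  unfold Rpoly
  simp only [derivative_add, derivative_mul, derivative_C, derivative_X, derivative_X_pow,
    zero_mul, zero_add, mul_one, add_zero, Nat.cast_ofNat]
  simp only [← mul_assoc, ← C_mul]
  norm_num

lemma Rderiv_eval (x : ℝ) : (Polynomial.derivative Rpoly).eval x =
    ((((((8 * x + 938) * x + 38976) * x + 739270) * x + 6838636) * x + 30105348) * x
      + 56029608) * x + 29758896 := by
  rw [Rderiv]; simp; ring

lemma Rderiv_natDegree : (Polynomial.derivative Rpoly).natDegree = 7 := by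
  rw [Rderiv]; compute_degree!

lemma Rderiv_ne_zero : Polynomial.derivative Rpoly ≠ 0 := by
  intro h
  have := Rderiv_natDegree
  rw [h] at this
  simp at this

lemma ivt_up {a b : ℝ} (hab : a ≤ b) (ha : (Polynomial.derivative Rpoly).eval a < 0)
    (hb : 0 < (Polynomial.derivative Rpoly).eval b) :
    ∃ x ∈ Set.Ioo a b, (Polynomial.derivative Rpoly).eval x = 0 := by
  have h := intermediate_value_Ioo hab
    ((Polynomial.derivative Rpoly).continuous_aeval.continuousOn (s := Set.Icc a b))
  obtain ⟨x, hx, hx0⟩ := h (Set.mem_Ioo.mpr ⟨ha, hb⟩)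
  exact ⟨x, hx, hx0⟩

lemma ivt_down {a b : ℝ} (hab : a ≤ b) (ha : 0 < (Polynomial.derivative Rpoly).eval a)
    (hb : (Polynomial.derivative Rpoly).eval b < 0) :
    ∃ x ∈ Set.Ioo a b, (Polynomial.derivative Rpoly).eval x = 0 := by
  have h := intermediate_value_Ioo' hab
    ((Polynomial.derivative Rpoly).continuous_aeval.continuousOn (s := Set.Icc a b))
  obtain ⟨x, hx, hx0⟩ := h (Set.mem_Ioo.mpr ⟨hb, ha⟩)
  exact ⟨x, hx, hx0⟩

/-- The derivative `R'(x)` has exactly seven real roots, all simple, with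
exactly one root in each of the seven open intervals `(-53,-52)`, `(-29,-28)`,
`(-16,-15)`, `(-11,-10)`, `(-6,-5)`, `(-4,-3)`, `(-1,0)`. -/
theorem Rpoly_derivative_roots :
    (Polynomial.derivative Rpoly).roots.card = 7 ∧
    (Polynomial.derivative Rpoly).roots.Nodup ∧
    (∃! x : ℝ, x ∈ Set.Ioo (-53 : ℝ) (-52) ∧ (Polynomial.derivative Rpoly).eval x = 0) ∧
    (∃! x : ℝ, x ∈ Set.Ioo (-29 : ℝ) (-28) ∧ (Polynomial.derivative Rpoly).eval x = 0) ∧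
    (∃! x : ℝ, x ∈ Set.Ioo (-16 : ℝ) (-15) ∧ (Polynomial.derivative Rpoly).eval x = 0) ∧
    (∃! x : ℝ, x ∈ Set.Ioo (-11 : ℝ) (-10) ∧ (Polynomial.derivative Rpoly).eval x = 0) ∧
    (∃! x : ℝ, x ∈ Set.Ioo (-6 : ℝ) (-5) ∧ (Polynomial.derivative Rpoly).eval x = 0) ∧
    (∃! x : ℝ, x ∈ Set.Ioo (-4 : ℝ) (-3) ∧ (Polynomial.derivative Rpoly).eval x = 0) ∧
    (∃! x : ℝ, x ∈ Set.Ioo (-1 : ℝ) 0 ∧ (Polynomial.derivative Rpoly).eval x = 0) ∧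
    (∀ x : ℝ, (Polynomial.derivative Rpoly).eval x = 0 →
      x ∈ Set.Ioo (-53 : ℝ) (-52) ∪ Set.Ioo (-29 : ℝ) (-28) ∪ Set.Ioo (-16 : ℝ) (-15) ∪
        Set.Ioo (-11 : ℝ) (-10) ∪ Set.Ioo (-6 : ℝ) (-5) ∪ Set.Ioo (-4 : ℝ) (-3) ∪
        Set.Ioo (-1 : ℝ) 0) := by
  obtain ⟨x1, hm1, hr1⟩ := ivt_up (by norm_num : (-53:ℝ) ≤ -52)
    (by rw [Rderiv_eval]; norm_num) (by rw [Rderiv_eval]; norm_num)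
  obtain ⟨x2, hm2, hr2⟩ := ivt_down (by norm_num : (-29:ℝ) ≤ -28)
    (by rw [Rderiv_eval]; norm_num) (by rw [Rderiv_eval]; norm_num)
  obtain ⟨x3, hm3, hr3⟩ := ivt_up (by norm_num : (-16:ℝ) ≤ -15)
    (by rw [Rderiv_eval]; norm_num) (by rw [Rderiv_eval]; norm_num)
  obtain ⟨x4, hm4, hr4⟩ := ivt_down (by norm_num : (-11:ℝ) ≤ -10)
    (by rw [Rderiv_eval]; norm_num) (by rw [Rderiv_eval]; norm_num)
  obtain ⟨x5, hm5, hr5⟩ := ivt_up (by norm_num : (-6:ℝ) ≤ -5)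
    (by rw [Rderiv_eval]; norm_num) (by rw [Rderiv_eval]; norm_num)
  obtain ⟨x6, hm6, hr6⟩ := ivt_down (by norm_num : (-4:ℝ) ≤ -3)
    (by rw [Rderiv_eval]; norm_num) (by rw [Rderiv_eval]; norm_num)
  obtain ⟨x7, hm7, hr7⟩ := ivt_up (by norm_num : (-1:ℝ) ≤ 0)
    (by rw [Rderiv_eval]; norm_num) (by rw [Rderiv_eval]; norm_num)
  obtain ⟨ha1, hb1⟩ := hm1
  obtain ⟨ha2, hb2⟩ := hm2
  obtain ⟨ha3, hb3⟩ := hm3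
  obtain ⟨ha4, hb4⟩ := hm4
  obtain ⟨ha5, hb5⟩ := hm5
  obtain ⟨ha6, hb6⟩ := hm6
  obtain ⟨ha7, hb7⟩ := hm7
  set f := Polynomial.derivative Rpoly with hf
  set T : Finset ℝ := {x1, x2, x3, x4, x5, x6, x7} with hT
  have hcard : T.card = 7 := by
    rw [hT,
      Finset.card_insert_of_notMem (by
        simp only [Finset.mem_insert, Finset.mem_singleton]; push_neg
        refine ⟨by intro h; rw [h] at hb1; linarith, by intro h; rw [h] at hb1; linarith,
          by intro h; rw [h] at hb1; linarith, by intro h; rw [h] at hb1; linarith,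
          by intro h; rw [h] at hb1; linarith, by intro h; rw [h] at hb1; linarith⟩),
      Finset.card_insert_of_notMem (by
        simp only [Finset.mem_insert, Finset.mem_singleton]; push_neg
        refine ⟨by intro h; rw [h] at hb2; linarith, by intro h; rw [h] at hb2; linarith,
          by intro h; rw [h] at hb2; linarith, by intro h; rw [h] at hb2; linarith,
          by intro h; rw [h] at hb2; linarith⟩),
      Finset.card_insert_of_notMem (by
        simp only [Finset.mem_insert, Finset.mem_singleton]; push_neg
        refine ⟨by intro h; rw [h] at hb3; linarith, by intro h; rw [h] at hb3; linarith,
          by intro h; rw [h] at hb3; linarith, by intro h; rw [h] at hb3; linarith⟩),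
      Finset.card_insert_of_notMem (by
        simp only [Finset.mem_insert, Finset.mem_singleton]; push_neg
        refine ⟨by intro h; rw [h] at hb4; linarith, by intro h; rw [h] at hb4; linarith,
          by intro h; rw [h] at hb4; linarith⟩),
      Finset.card_insert_of_notMem (by
        simp only [Finset.mem_insert, Finset.mem_singleton]; push_neg
        refine ⟨by intro h; rw [h] at hb5; linarith, by intro h; rw [h] at hb5; linarith⟩),
      Finset.card_insert_of_notMem (by
        simp only [Finset.mem_singleton]
        intro h; rw [h] at hb6; linarith),
      Finset.card_singleton]
  have hsub : T ⊆ f.roots.toFinset := by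
    intro y hy
    rw [hT] at hy
    simp only [Finset.mem_insert, Finset.mem_singleton] at hy
    rcases hy with rfl | rfl | rfl | rfl | rfl | rfl | rfl <;>
      exact Multiset.mem_toFinset.mpr ((mem_roots Rderiv_ne_zero).mpr (by assumption))
  have hle7 : f.roots.card ≤ 7 := by
    have := f.card_roots'
    rwa [Rderiv_natDegree] at this
  have htf : f.roots.toFinset.card ≤ Multiset.card f.roots := Multiset.toFinset_card_le _
  have h7le : 7 ≤ f.roots.toFinset.card := hcard ▸ Finset.card_le_card hsub
  have hc : Multiset.card f.roots = 7 := le_antisymm hle7 (le_trans h7le htf)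
  have htc : f.roots.toFinset.card = Multiset.card f.roots := le_antisymm htf (hc ▸ h7le)
  have hnd : f.roots.Nodup := by
    have hded : f.roots.dedup = f.roots :=
      Multiset.eq_of_le_of_card_le (Multiset.dedup_le _)
        (le_of_eq (by rw [← htc, Finset.card, Multiset.toFinset_val]))
    rw [← hded]; exact Multiset.nodup_dedup _
  have hTeq : T = f.roots.toFinset :=
    Finset.eq_of_subset_of_card_le hsub (by rw [hcard, htc, hc])
  have hmemT : ∀ y : ℝ, f.eval y = 0 →
      y = x1 ∨ y = x2 ∨ y = x3 ∨ y = x4 ∨ y = x5 ∨ y = x6 ∨ y = x7 := by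
    intro y hy
    have : y ∈ T := hTeq ▸ Multiset.mem_toFinset.mpr ((mem_roots Rderiv_ne_zero).mpr hy)
    simpa [hT, Finset.mem_insert, Finset.mem_singleton] using this
  refine ⟨hc, hnd, ⟨x1, ⟨⟨ha1, hb1⟩, hr1⟩, ?_⟩, ⟨x2, ⟨⟨ha2, hb2⟩, hr2⟩, ?_⟩,
    ⟨x3, ⟨⟨ha3, hb3⟩, hr3⟩, ?_⟩, ⟨x4, ⟨⟨ha4, hb4⟩, hr4⟩, ?_⟩, ⟨x5, ⟨⟨ha5, hb5⟩, hr5⟩, ?_⟩,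
    ⟨x6, ⟨⟨ha6, hb6⟩, hr6⟩, ?_⟩, ⟨x7, ⟨⟨ha7, hb7⟩, hr7⟩, ?_⟩, ?_⟩
  · rintro y ⟨⟨hya, hyb⟩, hy0⟩
    rcases hmemT y hy0 with rfl | rfl | rfl | rfl | rfl | rfl | rfl <;> linarith
  · rintro y ⟨⟨hya, hyb⟩, hy0⟩
    rcases hmemT y hy0 with rfl | rfl | rfl | rfl | rfl | rfl | rfl <;> linarith
  · rintro y ⟨⟨hya, hyb⟩, hy0⟩
    rcases hmemT y hy0 with rfl | rfl | rfl | rfl | rfl | rfl | rfl <;> linarith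
  · rintro y ⟨⟨hya, hyb⟩, hy0⟩
    rcases hmemT y hy0 with rfl | rfl | rfl | rfl | rfl | rfl | rfl <;> linarith
  · rintro y ⟨⟨hya, hyb⟩, hy0⟩
    rcases hmemT y hy0 with rfl | rfl | rfl | rfl | rfl | rfl | rfl <;> linarith
  · rintro y ⟨⟨hya, hyb⟩, hy0⟩
    rcases hmemT y hy0 with rfl | rfl | rfl | rfl | rfl | rfl | rfl <;> linarith
  · rintro y ⟨⟨hya, hyb⟩, hy0⟩
    rcases hmemT y hy0 with rfl | rfl | rfl | rfl | rfl | rfl | rfl <;> linarith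
  · intro x hx
    rcases hmemT x hx with rfl | rfl | rfl | rfl | rfl | rfl | rfl
    · exact Or.inl (Or.inl (Or.inl (Or.inl (Or.inl (Or.inl ⟨ha1, hb1⟩)))))
    · exact Or.inl (Or.inl (Or.inl (Or.inl (Or.inl (Or.inr ⟨ha2, hb2⟩)))))
    · exact Or.inl (Or.inl (Or.inl (Or.inl (Or.inr ⟨ha3, hb3⟩))))
    · exact Or.inl (Or.inl (Or.inl (Or.inr ⟨ha4, hb4⟩)))
    · exact Or.inl (Or.inl (Or.inr ⟨ha5, hb5⟩))
    · exact Or.inl (Or.inr ⟨ha6, hb6⟩)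
    · exact Or.inr ⟨ha7, hb7⟩
end

section
/- The 11th D'Arcais polynomial factors as P_11(x) = (x/11!) · (x+1)(x+2)(x+3)(x+8) · R̃(x), where R̃(x) ∈ ℚ[x] is a monic polynomial of degree 6, and all complex roots of P_11(x) are real. Moreover, R̃(x) has exactly one real root in each of the six open intervals (−67,−66), (−39,−38), (−22,−21), (−17,−16), (−8,−7), and (−1,0). -/
open Finset Polynomial

lemma sig1 : (∑ d ∈ Nat.divisors 1, d) = 1 := by decide
lemma sig2 : (∑ d ∈ Nat.divisors 2, d) = 3 := by decide
lemma sig3 : (∑ d ∈ Nat.divisors 3, d) = 4 := by decide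
lemma sig4 : (∑ d ∈ Nat.divisors 4, d) = 7 := by decide
lemma sig5 : (∑ d ∈ Nat.divisors 5, d) = 6 := by decide
lemma sig6 : (∑ d ∈ Nat.divisors 6, d) = 12 := by decide
lemma sig7 : (∑ d ∈ Nat.divisors 7, d) = 8 := by decide
lemma sig8 : (∑ d ∈ Nat.divisors 8, d) = 15 := by decide
lemma sig9 : (∑ d ∈ Nat.divisors 9, d) = 13 := by decide
lemma sig10 : (∑ d ∈ Nat.divisors 10, d) = 18 := by decide
lemma sig11 : (∑ d ∈ Nat.divisors 11, d) = 12 := by decide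
lemma d0 : darcais 0 = C ((1:ℚ)⁻¹) * (1) := by rw [darcais]; simp
lemma d1 : darcais 1 = C ((1:ℚ)⁻¹) * (X) := by
  rw [darcais]
  simp only [Finset.sum_range_succ, Finset.sum_range_zero, Nat.reduceSub, Nat.reduceAdd, sig1, sig2, sig3, sig4, sig5, sig6, sig7, sig8, sig9, sig10, sig11, d0]
  apply Polynomial.funext; intro x
  simp only [eval_mul, eval_add, eval_smul, eval_pow, eval_X, eval_C, eval_one, eval_ofNat, smul_eq_mul, eval_natCast, sig1, sig2, sig3, sig4, sig5, sig6, sig7, sig8, sig9, sig10, sig11, Nat.cast_ofNat, Nat.cast_one]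
  norm_num
  try ring
lemma d2 : darcais 2 = C ((2:ℚ)⁻¹) * (X^2 + 3 * X) := by
  rw [darcais]
  simp only [Finset.sum_range_succ, Finset.sum_range_zero, Nat.reduceSub, Nat.reduceAdd, sig1, sig2, sig3, sig4, sig5, sig6, sig7, sig8, sig9, sig10, sig11, d0, d1]
  apply Polynomial.funext; intro x
  simp only [eval_mul, eval_add, eval_smul, eval_pow, eval_X, eval_C, eval_one, eval_ofNat, smul_eq_mul, eval_natCast, sig1, sig2, sig3, sig4, sig5, sig6, sig7, sig8, sig9, sig10, sig11, Nat.cast_ofNat, Nat.cast_one]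
  norm_num
  try ring
lemma d3 : darcais 3 = C ((6:ℚ)⁻¹) * (X^3 + 9 * X^2 + 8 * X) := by
  rw [darcais]
  simp only [Finset.sum_range_succ, Finset.sum_range_zero, Nat.reduceSub, Nat.reduceAdd, sig1, sig2, sig3, sig4, sig5, sig6, sig7, sig8, sig9, sig10, sig11, d0, d1, d2]
  apply Polynomial.funext; intro x
  simp only [eval_mul, eval_add, eval_smul, eval_pow, eval_X, eval_C, eval_one, eval_ofNat, smul_eq_mul, eval_natCast, sig1, sig2, sig3, sig4, sig5, sig6, sig7, sig8, sig9, sig10, sig11, Nat.cast_ofNat, Nat.cast_one]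
  norm_num
  try ring
lemma d4 : darcais 4 = C ((24:ℚ)⁻¹) * (X^4 + 18 * X^3 + 59 * X^2 + 42 * X) := by
  rw [darcais]
  simp only [Finset.sum_range_succ, Finset.sum_range_zero, Nat.reduceSub, Nat.reduceAdd, sig1, sig2, sig3, sig4, sig5, sig6, sig7, sig8, sig9, sig10, sig11, d0, d1, d2, d3]
  apply Polynomial.funext; intro x
  simp only [eval_mul, eval_add, eval_smul, eval_pow, eval_X, eval_C, eval_one, eval_ofNat, smul_eq_mul, eval_natCast, sig1, sig2, sig3, sig4, sig5, sig6, sig7, sig8, sig9, sig10, sig11, Nat.cast_ofNat, Nat.cast_one]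
  norm_num
  try ring
lemma d5 : darcais 5 = C ((120:ℚ)⁻¹) * (X^5 + 30 * X^4 + 215 * X^3 + 450 * X^2 + 144 * X) := by
  rw [darcais]
  simp only [Finset.sum_range_succ, Finset.sum_range_zero, Nat.reduceSub, Nat.reduceAdd, sig1, sig2, sig3, sig4, sig5, sig6, sig7, sig8, sig9, sig10, sig11, d0, d1, d2, d3, d4]
  apply Polynomial.funext; intro x
  simp only [eval_mul, eval_add, eval_smul, eval_pow, eval_X, eval_C, eval_one, eval_ofNat, smul_eq_mul, eval_natCast, sig1, sig2, sig3, sig4, sig5, sig6, sig7, sig8, sig9, sig10, sig11, Nat.cast_ofNat, Nat.cast_one]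
  norm_num
  try ring
lemma d6 : darcais 6 = C ((720:ℚ)⁻¹) * (X^6 + 45 * X^5 + 565 * X^4 + 2475 * X^3 + 3394 * X^2 + 1440 * X) := by
  rw [darcais]
  simp only [Finset.sum_range_succ, Finset.sum_range_zero, Nat.reduceSub, Nat.reduceAdd, sig1, sig2, sig3, sig4, sig5, sig6, sig7, sig8, sig9, sig10, sig11, d0, d1, d2, d3, d4, d5]
  apply Polynomial.funext; intro x
  simp only [eval_mul, eval_add, eval_smul, eval_pow, eval_X, eval_C, eval_one, eval_ofNat, smul_eq_mul, eval_natCast, sig1, sig2, sig3, sig4, sig5, sig6, sig7, sig8, sig9, sig10, sig11, Nat.cast_ofNat, Nat.cast_one]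
  norm_num
  try ring
lemma d7 : darcais 7 = C ((5040:ℚ)⁻¹) * (X^7 + 63 * X^6 + 1225 * X^5 + 9345 * X^4 + 28294 * X^3 + 30912 * X^2 + 5760 * X) := by
  rw [darcais]
  simp only [Finset.sum_range_succ, Finset.sum_range_zero, Nat.reduceSub, Nat.reduceAdd, sig1, sig2, sig3, sig4, sig5, sig6, sig7, sig8, sig9, sig10, sig11, d0, d1, d2, d3, d4, d5, d6]
  apply Polynomial.funext; intro x
  simp only [eval_mul, eval_add, eval_smul, eval_pow, eval_X, eval_C, eval_one, eval_ofNat, smul_eq_mul, eval_natCast, sig1, sig2, sig3, sig4, sig5, sig6, sig7, sig8, sig9, sig10, sig11, Nat.cast_ofNat, Nat.cast_one]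
  norm_num
  try ring
lemma d8 : darcais 8 = C ((40320:ℚ)⁻¹) * (X^8 + 84 * X^7 + 2338 * X^6 + 27720 * X^5 + 147889 * X^4 + 340116 * X^3 + 293292 * X^2 + 75600 * X) := by
  rw [darcais]
  simp only [Finset.sum_range_succ, Finset.sum_range_zero, Nat.reduceSub, Nat.reduceAdd, sig1, sig2, sig3, sig4, sig5, sig6, sig7, sig8, sig9, sig10, sig11, d0, d1, d2, d3, d4, d5, d6, d7]
  apply Polynomial.funext; intro x
  simp only [eval_mul, eval_add, eval_smul, eval_pow, eval_X, eval_C, eval_one, eval_ofNat, smul_eq_mul, eval_natCast, sig1, sig2, sig3, sig4, sig5, sig6, sig7, sig8, sig9, sig10, sig11, Nat.cast_ofNat, Nat.cast_one]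
  norm_num
  try ring
lemma d9 : darcais 9 = C ((362880:ℚ)⁻¹) * (X^9 + 108 * X^8 + 4074 * X^7 + 69552 * X^6 + 579369 * X^5 + 2341332 * X^4 + 4335596 * X^3 + 3032208 * X^2 + 524160 * X) := by
  rw [darcais]
  simp only [Finset.sum_range_succ, Finset.sum_range_zero, Nat.reduceSub, Nat.reduceAdd, sig1, sig2, sig3, sig4, sig5, sig6, sig7, sig8, sig9, sig10, sig11, d0, d1, d2, d3, d4, d5, d6, d7, d8]
  apply Polynomial.funext; intro x
  simp only [eval_mul, eval_add, eval_smul, eval_pow, eval_X, eval_C, eval_one, eval_ofNat, smul_eq_mul, eval_natCast, sig1, sig2, sig3, sig4, sig5, sig6, sig7, sig8, sig9, sig10, sig11, Nat.cast_ofNat, Nat.cast_one]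
  norm_num
  try ring
lemma d10 : darcais 10 = C ((3628800:ℚ)⁻¹) * (X^10 + 135 * X^9 + 6630 * X^8 + 154350 * X^7 + 1857513 * X^6 + 11744775 * X^5 + 38049920 * X^4 + 57773700 * X^3 + 36290736 * X^2 + 6531840 * X) := by
  rw [darcais]
  simp only [Finset.sum_range_succ, Finset.sum_range_zero, Nat.reduceSub, Nat.reduceAdd, sig1, sig2, sig3, sig4, sig5, sig6, sig7, sig8, sig9, sig10, sig11, d0, d1, d2, d3, d4, d5, d6, d7, d8, d9]
  apply Polynomial.funext; intro x
  simp only [eval_mul, eval_add, eval_smul, eval_pow, eval_X, eval_C, eval_one, eval_ofNat, smul_eq_mul, eval_natCast, sig1, sig2, sig3, sig4, sig5, sig6, sig7, sig8, sig9, sig10, sig11, Nat.cast_ofNat, Nat.cast_one]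
  norm_num
  try ring
lemma d11 : darcais 11 = C ((39916800:ℚ)⁻¹) * (X^11 + 165 * X^10 + 10230 * X^9 + 311850 * X^8 + 5133513 * X^7 + 47002725 * X^6 + 237810320 * X^5 + 636593100 * X^4 + 831170736 * X^3 + 433762560 * X^2 + 43545600 * X) := by
  rw [darcais]
  simp only [Finset.sum_range_succ, Finset.sum_range_zero, Nat.reduceSub, Nat.reduceAdd, sig1, sig2, sig3, sig4, sig5, sig6, sig7, sig8, sig9, sig10, sig11, d0, d1, d2, d3, d4, d5, d6, d7, d8, d9, d10]
  apply Polynomial.funext; intro x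
  simp only [eval_mul, eval_add, eval_smul, eval_pow, eval_X, eval_C, eval_one, eval_ofNat, smul_eq_mul, eval_natCast, sig1, sig2, sig3, sig4, sig5, sig6, sig7, sig8, sig9, sig10, sig11, Nat.cast_ofNat, Nat.cast_one]
  norm_num
  try ring

noncomputable def Rtt : Polynomial ℚ :=
  X^6 + 151*X^5 + 8057*X^4 + 190049*X^3 + 1983222*X^2 + 7260120*X + 907200

lemma Rtt_monic : Rtt.Monic := by unfold Rtt; monicity!

lemma Rtt_deg : Rtt.natDegree = 6 := by unfold Rtt; compute_degree!

lemma fact11 : (Nat.factorial 11 : ℚ) = 39916800 := by norm_num [Nat.factorial]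

lemma darcais11_fact :
    darcais 11 = C ((Nat.factorial 11 : ℚ)⁻¹) * X * (X + 1) * (X + 2) * (X + 3) *
      (X + 8) * Rtt := by
  rw [d11, fact11]; unfold Rtt
  apply Polynomial.funext; intro x
  simp only [eval_mul, eval_add, eval_pow, eval_X, eval_C, eval_one, eval_ofNat]
  ring

lemma aeval_Rtt {A : Type*} [CommRing A] [Algebra ℚ A] (x : A) :
    Polynomial.aeval x Rtt
      = x^6 + 151*x^5 + 8057*x^4 + 190049*x^3 + 1983222*x^2 + 7260120*x + 907200 := by
  simp [Rtt, map_ofNat]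

lemma aeval_cast (r : ℝ) :
    Polynomial.aeval ((r : ℂ)) Rtt = ((Polynomial.aeval r Rtt : ℝ) : ℂ) := by
  rw [aeval_Rtt, aeval_Rtt]; push_cast; ring

lemma Rtt_map_ne : Rtt.map (algebraMap ℚ ℂ) ≠ 0 := by
  simpa using (Polynomial.map_ne_zero (f := algebraMap ℚ ℂ) Rtt_monic.ne_zero)

/-- The 11th D'Arcais polynomial factors as
`P₁₁(x) = (x/11!)(x+1)(x+2)(x+3)(x+8)·R̃(x)` with `R̃` monic of degree 6, all
complex roots of `P₁₁` are real, and `R̃` has exactly one real root in each of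
the open intervals `(-67,-66)`, `(-39,-38)`, `(-22,-21)`, `(-17,-16)`,
`(-8,-7)`, `(-1,0)`. -/
theorem darcais_eleven_real_rooted :
    ∃ Rt : Polynomial ℚ, Rt.Monic ∧ Rt.natDegree = 6 ∧
      darcais 11
        = Polynomial.C ((Nat.factorial 11 : ℚ)⁻¹) * X * (X + 1) * (X + 2) * (X + 3) *
            (X + 8) * Rt ∧
      (∀ z : ℂ, Polynomial.aeval z (darcais 11) = 0 → z.im = 0) ∧
      (∃! x : ℝ, x ∈ Set.Ioo (-67 : ℝ) (-66) ∧ Polynomial.aeval x Rt = 0) ∧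
      (∃! x : ℝ, x ∈ Set.Ioo (-39 : ℝ) (-38) ∧ Polynomial.aeval x Rt = 0) ∧
      (∃! x : ℝ, x ∈ Set.Ioo (-22 : ℝ) (-21) ∧ Polynomial.aeval x Rt = 0) ∧
      (∃! x : ℝ, x ∈ Set.Ioo (-17 : ℝ) (-16) ∧ Polynomial.aeval x Rt = 0) ∧
      (∃! x : ℝ, x ∈ Set.Ioo (-8 : ℝ) (-7) ∧ Polynomial.aeval x Rt = 0) ∧
      (∃! x : ℝ, x ∈ Set.Ioo (-1 : ℝ) 0 ∧ Polynomial.aeval x Rt = 0) := by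
  refine ⟨Rtt, Rtt_monic, Rtt_deg, darcais11_fact, ?_⟩
  set f : ℝ → ℝ := fun x => Polynomial.aeval x Rtt with hf
  have hcont : ∀ a b : ℝ, ContinuousOn f (Set.Icc a b) :=
    fun a b => (Polynomial.continuous_aeval Rtt).continuousOn
  -- roots in the six intervals
  obtain ⟨r1, hr1m, hr1z⟩ : ∃ r ∈ Set.Ioo (-67:ℝ) (-66), f r = 0 := by
    have h := intermediate_value_Ioo' (by norm_num : (-67:ℝ) ≤ -66) (hcont _ _)
    have h0 : (0:ℝ) ∈ Set.Ioo (f (-66)) (f (-67)) := by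
      simp only [hf, aeval_Rtt]; constructor <;> norm_num
    obtain ⟨r, hm, hz⟩ := h h0; exact ⟨r, hm, hz⟩
  obtain ⟨r2, hr2m, hr2z⟩ : ∃ r ∈ Set.Ioo (-39:ℝ) (-38), f r = 0 := by
    have h := intermediate_value_Ioo (by norm_num : (-39:ℝ) ≤ -38) (hcont _ _)
    have h0 : (0:ℝ) ∈ Set.Ioo (f (-39)) (f (-38)) := by
      simp only [hf, aeval_Rtt]; constructor <;> norm_num
    obtain ⟨r, hm, hz⟩ := h h0; exact ⟨r, hm, hz⟩
  obtain ⟨r3, hr3m, hr3z⟩ : ∃ r ∈ Set.Ioo (-22:ℝ) (-21), f r = 0 := by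
    have h := intermediate_value_Ioo' (by norm_num : (-22:ℝ) ≤ -21) (hcont _ _)
    have h0 : (0:ℝ) ∈ Set.Ioo (f (-21)) (f (-22)) := by
      simp only [hf, aeval_Rtt]; constructor <;> norm_num
    obtain ⟨r, hm, hz⟩ := h h0; exact ⟨r, hm, hz⟩
  obtain ⟨r4, hr4m, hr4z⟩ : ∃ r ∈ Set.Ioo (-17:ℝ) (-16), f r = 0 := by
    have h := intermediate_value_Ioo (by norm_num : (-17:ℝ) ≤ -16) (hcont _ _)
    have h0 : (0:ℝ) ∈ Set.Ioo (f (-17)) (f (-16)) := by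
      simp only [hf, aeval_Rtt]; constructor <;> norm_num
    obtain ⟨r, hm, hz⟩ := h h0; exact ⟨r, hm, hz⟩
  obtain ⟨r5, hr5m, hr5z⟩ : ∃ r ∈ Set.Ioo (-8:ℝ) (-7), f r = 0 := by
    have h := intermediate_value_Ioo' (by norm_num : (-8:ℝ) ≤ -7) (hcont _ _)
    have h0 : (0:ℝ) ∈ Set.Ioo (f (-7)) (f (-8)) := by
      simp only [hf, aeval_Rtt]; constructor <;> norm_num
    obtain ⟨r, hm, hz⟩ := h h0; exact ⟨r, hm, hz⟩
  obtain ⟨r6, hr6m, hr6z⟩ : ∃ r ∈ Set.Ioo (-1:ℝ) 0, f r = 0 := by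
    have h := intermediate_value_Ioo (by norm_num : (-1:ℝ) ≤ 0) (hcont _ _)
    have h0 : (0:ℝ) ∈ Set.Ioo (f (-1)) (f 0) := by
      simp only [hf, aeval_Rtt]; constructor <;> norm_num
    obtain ⟨r, hm, hz⟩ := h h0; exact ⟨r, hm, hz⟩
  obtain ⟨h1l, h1r⟩ := hr1m
  obtain ⟨h2l, h2r⟩ := hr2m
  obtain ⟨h3l, h3r⟩ := hr3m
  obtain ⟨h4l, h4r⟩ := hr4m
  obtain ⟨h5l, h5r⟩ := hr5m
  obtain ⟨h6l, h6r⟩ := hr6m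
  -- the complex roots of Rtt are exactly the (casts of the) rᵢ
  set g : Polynomial ℂ := Rtt.map (algebraMap ℚ ℂ) with hg
  have hgroot : ∀ r : ℝ, f r = 0 → ((r : ℂ)) ∈ g.roots := by
    intro r hr
    rw [Polynomial.mem_roots Rtt_map_ne]
    have hr' : Polynomial.aeval r Rtt = 0 := hr
    have : Polynomial.aeval ((r:ℂ)) Rtt = 0 := by rw [aeval_cast, hr']; simp
    rwa [Polynomial.IsRoot, Polynomial.eval_map, ← Polynomial.aeval_def]
  have key : ∀ z : ℂ, Polynomial.aeval z Rtt = 0 →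
      z = r1 ∨ z = r2 ∨ z = r3 ∨ z = r4 ∨ z = r5 ∨ z = r6 := by
    intro z hz
    by_contra hcon
    push_neg at hcon
    obtain ⟨hz1, hz2, hz3, hz4, hz5, hz6⟩ := hcon
    have hzr : z ∈ g.roots := by
      rw [Polynomial.mem_roots Rtt_map_ne]
      rwa [Polynomial.IsRoot, Polynomial.eval_map, ← Polynomial.aeval_def]
    have hco : ∀ a b : ℝ, a < b → ((a:ℂ)) ≠ ((b:ℂ)) := by
      intro a b hab h; exact absurd (Complex.ofReal_inj.mp h) (ne_of_lt hab)
    set M : Multiset ℂ := z ::ₘ ((r1:ℂ)) ::ₘ ((r2:ℂ)) ::ₘ ((r3:ℂ)) ::ₘ ((r4:ℂ)) ::ₘ ((r5:ℂ)) ::ₘ {((r6:ℂ))} with hM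
    have hsub : M ⊆ g.roots := by
      intro w hw
      simp only [hM, Multiset.mem_cons, Multiset.mem_singleton] at hw
      rcases hw with h|h|h|h|h|h|h <;> subst h
      · exact hzr
      · exact hgroot _ hr1z
      · exact hgroot _ hr2z
      · exact hgroot _ hr3z
      · exact hgroot _ hr4z
      · exact hgroot _ hr5z
      · exact hgroot _ hr6z
    have hnd : M.Nodup := by
      simp only [hM, Multiset.nodup_cons, Multiset.mem_cons, Multiset.mem_singleton,
        Multiset.nodup_singleton, and_true]
      refine ⟨?_, ?_, ?_, ?_, ?_, ?_⟩
      · push_neg; exact ⟨hz1, hz2, hz3, hz4, hz5, hz6⟩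
      · push_neg
        exact ⟨hco _ _ (by linarith), hco _ _ (by linarith), hco _ _ (by linarith),
          hco _ _ (by linarith), hco _ _ (by linarith)⟩
      · push_neg
        exact ⟨hco _ _ (by linarith), hco _ _ (by linarith), hco _ _ (by linarith),
          hco _ _ (by linarith)⟩
      · push_neg
        exact ⟨hco _ _ (by linarith), hco _ _ (by linarith), hco _ _ (by linarith)⟩
      · push_neg; exact ⟨hco _ _ (by linarith), hco _ _ (by linarith)⟩
      · exact hco _ _ (by linarith)
    have hle : M ≤ g.roots := (Multiset.le_iff_subset hnd).mpr hsub
    have hcard : Multiset.card M ≤ Multiset.card g.roots := Multiset.card_le_card hle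
    have hMc : Multiset.card M = 7 := by simp [hM]
    have : Multiset.card g.roots ≤ 6 := by
      have h := Polynomial.card_roots' g
      rwa [hg, Rtt_monic.natDegree_map, Rtt_deg] at h
    omega
  -- real uniqueness helper
  have rkey : ∀ y : ℝ, f y = 0 →
      y = r1 ∨ y = r2 ∨ y = r3 ∨ y = r4 ∨ y = r5 ∨ y = r6 := by
    intro y hy
    have hy' : Polynomial.aeval y Rtt = 0 := hy
    have : Polynomial.aeval ((y:ℂ)) Rtt = 0 := by
      rw [aeval_cast, hy']; simp
    rcases key _ this with h|h|h|h|h|h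
    · exact Or.inl (Complex.ofReal_inj.mp h)
    · exact Or.inr (Or.inl (Complex.ofReal_inj.mp h))
    · exact Or.inr (Or.inr (Or.inl (Complex.ofReal_inj.mp h)))
    · exact Or.inr (Or.inr (Or.inr (Or.inl (Complex.ofReal_inj.mp h))))
    · exact Or.inr (Or.inr (Or.inr (Or.inr (Or.inl (Complex.ofReal_inj.mp h)))))
    · exact Or.inr (Or.inr (Or.inr (Or.inr (Or.inr (Complex.ofReal_inj.mp h)))))
  refine ⟨?_, ?_, ?_, ?_, ?_, ?_, ?_⟩
  · -- all complex roots of darcais 11 are real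
    intro z hz
    rw [darcais11_fact] at hz
    simp only [map_mul, map_add, map_ofNat, Polynomial.aeval_X, Polynomial.aeval_C, map_one,
      mul_eq_zero] at hz
    rcases hz with ((((((hc | h0) | h1) | h2) | h3) | h8) | hR)
    · rw [fact11] at hc
      simp at hc
    · rw [h0]; simp
    · have : z = -1 := by linear_combination h1
      rw [this]; simp
    · have : z = -2 := by linear_combination h2
      rw [this]; simp
    · have : z = -3 := by linear_combination h3
      rw [this]; simp
    · have : z = -8 := by linear_combination h8
      rw [this]; simp
    · rcases key z hR with h|h|h|h|h|h <;> (rw [h]; simp)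
  · refine ⟨r1, ⟨⟨h1l, h1r⟩, hr1z⟩, ?_⟩
    rintro y ⟨⟨hyl, hyr⟩, hy⟩
    rcases rkey y hy with h|h|h|h|h|h <;> first | exact h | (exfalso; subst h; linarith)
  · refine ⟨r2, ⟨⟨h2l, h2r⟩, hr2z⟩, ?_⟩
    rintro y ⟨⟨hyl, hyr⟩, hy⟩
    rcases rkey y hy with h|h|h|h|h|h <;> first | exact h | (exfalso; subst h; linarith)
  · refine ⟨r3, ⟨⟨h3l, h3r⟩, hr3z⟩, ?_⟩
    rintro y ⟨⟨hyl, hyr⟩, hy⟩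
    rcases rkey y hy with h|h|h|h|h|h <;> first | exact h | (exfalso; subst h; linarith)
  · refine ⟨r4, ⟨⟨h4l, h4r⟩, hr4z⟩, ?_⟩
    rintro y ⟨⟨hyl, hyr⟩, hy⟩
    rcases rkey y hy with h|h|h|h|h|h <;> first | exact h | (exfalso; subst h; linarith)
  · refine ⟨r5, ⟨⟨h5l, h5r⟩, hr5z⟩, ?_⟩
    rintro y ⟨⟨hyl, hyr⟩, hy⟩
    rcases rkey y hy with h|h|h|h|h|h <;> first | exact h | (exfalso; subst h; linarith)
  · refine ⟨r6, ⟨⟨h6l, h6r⟩, hr6z⟩, ?_⟩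
    rintro y ⟨⟨hyl, hyr⟩, hy⟩
    rcases rkey y hy with h|h|h|h|h|h <;> first | exact h | (exfalso; subst h; linarith)
end
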